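/- arXiv:1102.3760 — 6 statements merged into one kernel-verified Lean document; each statement's English description precedes it below -/
import Mathlib

section
/- Let G be a graph and a, b, c three distinct vertices of G. Then either G contains a K_3-minor rooted at a, b, c (three pairwise-disjoint pairwise-adjacent connected subgraphs containing a, b, c respectively), or there exists a vertex v of G such that at most one of a, b, c lies in each connected component of G - v. -/
open SimpleGraph

variable {V : Type*}

/-- Branch-set definition of an `H`-minor in `G`. -/
def HasGraphMinor {W : Type*} (G : SimpleGraph V) (H : SimpleGraph W) : Prop :=
  ∃ B : W → Set V,
    (∀ w, (B w).Nonempty) ∧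
    (∀ w, (G.induce (B w)).Connected) ∧
    (Pairwise fun w w' => Disjoint (B w) (B w')) ∧
    ∀ ⦃w w'⦄, H.Adj w w' → ∃ x ∈ B w, ∃ y ∈ B w', G.Adj x y

/-- `A,B,C,D` are the branch sets of a `K₄`-minor rooted at `a,b,c,d`. -/
def RootedK4MinorOn (G : SimpleGraph V) (a b c d : V) (A B C D : Set V) : Prop :=
    a ∈ A ∧ b ∈ B ∧ c ∈ C ∧ d ∈ D ∧
    (G.induce A).Connected ∧ (G.induce B).Connected ∧
    (G.induce C).Connected ∧ (G.induce D).Connected ∧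
    Disjoint A B ∧ Disjoint A C ∧ Disjoint A D ∧
    Disjoint B C ∧ Disjoint B D ∧ Disjoint C D ∧
    (∃ x ∈ A, ∃ y ∈ B, G.Adj x y) ∧ (∃ x ∈ A, ∃ y ∈ C, G.Adj x y) ∧
    (∃ x ∈ A, ∃ y ∈ D, G.Adj x y) ∧ (∃ x ∈ B, ∃ y ∈ C, G.Adj x y) ∧
    (∃ x ∈ B, ∃ y ∈ D, G.Adj x y) ∧ (∃ x ∈ C, ∃ y ∈ D, G.Adj x y)

/-- A `K₄`-minor rooted at `a,b,c,d`. -/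
def RootedK4Minor (G : SimpleGraph V) (a b c d : V) : Prop :=
  ∃ A B C D : Set V, RootedK4MinorOn G a b c d A B C D

/-- A `K₃`-minor rooted at `a,b,c`. -/
def RootedK3Minor (G : SimpleGraph V) (a b c : V) : Prop :=
  ∃ A B C : Set V,
    a ∈ A ∧ b ∈ B ∧ c ∈ C ∧
    (G.induce A).Connected ∧ (G.induce B).Connected ∧ (G.induce C).Connected ∧
    Disjoint A B ∧ Disjoint A C ∧ Disjoint B C ∧
    (∃ x ∈ A, ∃ y ∈ B, G.Adj x y) ∧ (∃ x ∈ A, ∃ y ∈ C, G.Adj x y) ∧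
    (∃ x ∈ B, ∃ y ∈ C, G.Adj x y)

/-- Add a new apex vertex adjacent to every vertex of `s`. -/
def Apex (G : SimpleGraph V) (s : Set V) : SimpleGraph (Option V) where
  Adj x y :=
    (∃ u v, x = some u ∧ y = some v ∧ G.Adj u v) ∨
    (∃ u, x = some u ∧ y = none ∧ u ∈ s) ∨
    (∃ v, x = none ∧ y = some v ∧ v ∈ s)
  symm := by
    constructor
    rintro x y (⟨u, v, rfl, rfl, h⟩ | ⟨u, rfl, rfl, h⟩ | ⟨v, rfl, rfl, h⟩)
    · exact Or.inl ⟨v, u, rfl, rfl, h.symm⟩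
    · exact Or.inr (Or.inr ⟨u, rfl, rfl, h⟩)
    · exact Or.inr (Or.inl ⟨v, rfl, rfl, h⟩)
  loopless := by
    constructor
    rintro x (⟨u, v, rfl, h, hadj⟩ | ⟨u, rfl, h, _⟩ | ⟨v, h, rfl, _⟩)
    · rw [Option.some_inj] at h; subst h; exact hadj.ne rfl
    · cases h
    · cases h

/-- Planarity, via Wagner's theorem: no `K₅`-minor and no `K₃,₃`-minor. -/
def IsPlanar (G : SimpleGraph V) : Prop :=
  ¬ HasGraphMinor G (⊤ : SimpleGraph (Fin 5)) ∧
  ¬ HasGraphMinor G (completeBipartiteGraph (Fin 3) (Fin 3))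

/-- `G` is `k`-connected: more than `k` vertices, and deleting fewer than `k`
vertices leaves a connected graph. -/
def KConnected (k : ℕ) (G : SimpleGraph V) : Prop :=
  k < Nat.card V ∧ ∀ S : Set V, S.Finite → S.ncard < k → (G.induce Sᶜ).Connected

/-- An `(s₁t₁,s₂t₂)`-linkage: an `s₁t₁`-path and an `s₂t₂`-path that are disjoint. -/
def Linkage (G : SimpleGraph V) (s₁ t₁ s₂ t₂ : V) : Prop :=
  ∃ (P : G.Walk s₁ t₁) (Q : G.Walk s₂ t₂),
    P.IsPath ∧ Q.IsPath ∧ P.support.Disjoint Q.support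

/-- `G` is obtained from its induced subgraph on `S` by attaching, to each triangle,
a (possibly empty) clique: `t x` records the triangle of the clique containing `x ∉ S`. -/
def CliqueExpansion (G : SimpleGraph V) (S : Set V) (t : V → Finset V) : Prop :=
  ∀ x ∉ S, ↑(t x) ⊆ S ∧ (t x).card = 3 ∧
    (∀ y ∈ t x, ∀ z ∈ t x, y ≠ z → G.Adj y z) ∧
    (∀ y, G.Adj x y ↔ (y ∈ t x ∨ (y ∉ S ∧ y ≠ x ∧ t y = t x)))

/-- `H` is a planar graph with outerface cycle `(p,q,r,s)`, every internal face a
triangle, and every triangle a face.  (Combinatorial surrogate: `p,q,r,s` bound a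
common face — witnessed by planarity of the graph with an apex added adjacent to
them — the edge count of a near-triangulation of a quadrilateral, and no
separating triangle.) -/
def IsQuadTriangulation {U : Type*} (H : SimpleGraph U) (p q r s : U) : Prop :=
  p ≠ q ∧ p ≠ r ∧ p ≠ s ∧ q ≠ r ∧ q ≠ s ∧ r ≠ s ∧
  H.Adj p q ∧ H.Adj q r ∧ H.Adj r s ∧ H.Adj s p ∧
  IsPlanar H ∧ IsPlanar (Apex H {p, q, r, s}) ∧
  H.edgeSet.ncard + 7 = 3 * Nat.card U ∧
  ∀ T : Finset U, T.card = 3 → (∀ x ∈ T, ∀ y ∈ T, x ≠ y → H.Adj x y) →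
    (((↑T)ᶜ : Set U) = ∅ ∨ (H.induce (↑T)ᶜ).Connected)

/-- `W` is an `(a,b,c,d)`-web. -/
def IsWeb (W : SimpleGraph V) (a b c d : V) : Prop :=
  ∃ (S : Set V) (ha : a ∈ S) (hb : b ∈ S) (hc : c ∈ S) (hd : d ∈ S),
    IsQuadTriangulation (W.induce S) ⟨a, ha⟩ ⟨b, hb⟩ ⟨c, hc⟩ ⟨d, hd⟩ ∧
    ∃ t, CliqueExpansion W S t

/-- `W` is an `{a,b,c,d}`-web, i.e. an `(a',b',c',d')`-web for some ordering. -/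
def IsUnorderedWeb (W : SimpleGraph V) (a b c d : V) : Prop :=
  ∃ p q r s : V, ({p, q, r, s} : Set V) = {a, b, c, d} ∧ IsWeb W p q r s

/-- A separation `(A, B)` of `G` (given by the vertex sets of the two sides). -/
def IsSeparation (G : SimpleGraph V) (A B : Set V) : Prop :=
  A ∪ B = Set.univ ∧
  (∀ ⦃x y⦄, G.Adj x y → (x ∈ A ∧ y ∈ A) ∨ (x ∈ B ∧ y ∈ B)) ∧
  (A \ B).Nonempty ∧ (B \ A).Nonempty

/-!
If no vertex separates the roots pairwise, then `G - c` joins `a` to `b` by a path `P`, and `G - b`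
joins `c` to `P`; the first vertex `m` of `P` reached from `c` is the center of a subdivided claw
whose legs end at `a`, `b`, `c`. As `m` does not separate the roots either, two of them are joined
by a walk in `G - m`. Where that walk first leaves its own leg for another leg, its initial part
enlarges its own leg, the leg it enters stays as it is, and the third leg absorbs the center: these
are the three branch sets. When `m = a` the claw degenerates to a path `b ⋯ a ⋯ c`, and a
`b`–`c` walk in `G - a` plays the same role with `{a}` as the middle branch set.
-/

namespace SimpleGraph

variable {G : SimpleGraph V}

lemma connected_induce_insert {s : Set V} {v w : V} (hs : (G.induce s).Connected) (hw : w ∈ s)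
    (hvw : G.Adj v w) : (G.induce (insert v s)).Connected := by
  rw [← Set.singleton_union]
  exact connected_induce_union Preconnected.of_subsingleton hs.preconnected rfl hw hvw

lemma exists_walk_notMem_support_of_not_separates {s : Set V} {v : V}
    (h : ¬ ∀ x ∈ s, ∀ y ∈ s, x ≠ y → ∀ (hx : x ∈ ({v}ᶜ : Set V)) (hy : y ∈ ({v}ᶜ : Set V)),
      ¬ (G.induce ({v}ᶜ : Set V)).Reachable ⟨x, hx⟩ ⟨y, hy⟩) :
    ∃ x ∈ s, ∃ y ∈ s, x ≠ y ∧ ∃ w : G.Walk x y, v ∉ w.support := by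
  push Not at h
  obtain ⟨x, hx, y, hy, hxy, _, _, ⟨w⟩⟩ := h
  refine ⟨x, hx, y, hy, hxy, w.map ⟨Subtype.val, id⟩, fun hv => ?_⟩
  rw [Walk.support_map, List.mem_map] at hv
  obtain ⟨⟨z, hz⟩, -, hzv⟩ := hv
  exact hz hzv

lemma exists_walk_notMem_support_of_subset {s : Set V} {u u' v : V}
    (h : ∃ x ∈ s, ∃ y ∈ s, x ≠ y ∧ ∃ w : G.Walk x y, v ∉ w.support) (hs : s ⊆ {u, u', v}) :
    ∃ w : G.Walk u u', v ∉ w.support := by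
  obtain ⟨x, hx, y, hy, hxy, w, hw⟩ := h
  have hxv : x ≠ v := fun h => hw (h ▸ w.start_mem_support)
  have hyv : y ≠ v := fun h => hw (h ▸ w.end_mem_support)
  rcases hs hx with rfl | rfl | rfl <;> rcases hs hy with rfl | rfl | rfl <;>
    first | exact absurd rfl hxy | exact absurd rfl hxv | exact absurd rfl hyv | skip
  · exact ⟨w, hw⟩
  · exact ⟨w.reverse, by simpa using hw⟩

namespace Walk

lemma exists_walk_outside_adj_mem {u v : V} (w : G.Walk u v) (t : Set V) (hv : v ∈ t)
    (hu : u ∉ t) : ∃ p y, ∃ S : G.Walk u p, G.Adj p y ∧ y ∈ t ∧ (∀ z ∈ S.support, z ∉ t) ∧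
      S.support ⊆ w.support ∧ y ∈ w.support := by
  induction w with
  | nil => exact absurd hv hu
  | @cons u u' v h w ih =>
    by_cases hu' : u' ∈ t
    · exact ⟨u, u', nil, h, hu', by simpa using hu, by simp, by simp⟩
    · obtain ⟨p, y, S, hpy, hy, hSt, hSw, hyw⟩ := ih hv hu'
      refine ⟨p, y, cons h S, hpy, hy, ?_, ?_, by simp [hyw]⟩
      · simpa [hu] using hSt
      · simpa using List.cons_subset_cons u hSw

lemma IsPath.eq_of_mem_takeUntil_of_mem_dropUntil [DecidableEq V] {u v m z : V}
    {P : G.Walk u v} (hP : P.IsPath) (hm : m ∈ P.support) (hzt : z ∈ (P.takeUntil m hm).support)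
    (hzd : z ∈ (P.dropUntil m hm).support) : z = m := by
  have hnd := hP.support_nodup
  rw [← P.take_spec hm, support_append] at hnd
  rw [← cons_tail_support, List.mem_cons] at hzd
  exact hzd.resolve_right (List.disjoint_of_nodup_append hnd hzt)

end Walk

end SimpleGraph

section

variable {G : SimpleGraph V}

namespace RootedK3Minor

variable {a b c : V}

lemma swap₁₂ (h : RootedK3Minor G a b c) : RootedK3Minor G b a c := by
  obtain ⟨A, B, C, ha, hb, hc, hA, hB, hC, dAB, dAC, dBC, ⟨x, hx, y, hy, hxy⟩, eAC, eBC⟩ := h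
  exact ⟨B, A, C, hb, ha, hc, hB, hA, hC, dAB.symm, dBC, dAC, ⟨y, hy, x, hx, hxy.symm⟩, eBC, eAC⟩

lemma swap₂₃ (h : RootedK3Minor G a b c) : RootedK3Minor G a c b := by
  obtain ⟨A, B, C, ha, hb, hc, hA, hB, hC, dAB, dAC, dBC, eAB, eAC, ⟨x, hx, y, hy, hxy⟩⟩ := h
  exact ⟨A, C, B, ha, hc, hb, hA, hC, hB, dAC, dAB, dBC.symm, eAC, eAB, ⟨y, hy, x, hx, hxy.symm⟩⟩

end RootedK3Minor

structure IsLeg (G : SimpleGraph V) (m r : V) (A : Set V) : Prop where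
  mem : r ∈ A
  connected : (G.induce A).Connected
  center_notMem : m ∉ A
  exists_adj : ∃ x ∈ A, G.Adj m x

lemma SimpleGraph.Walk.isLeg_support {m r p : V} (S : G.Walk p r)
    (hmp : G.Adj m p) (hmS : m ∉ S.support) : IsLeg G m r {z | z ∈ S.support} :=
  ⟨S.end_mem_support, S.connected_induce_support, hmS, p, S.start_mem_support, hmp⟩

lemma SimpleGraph.Walk.IsPath.isLeg_tail {m r : V} {L : G.Walk m r}
    (hL : L.IsPath) (hmr : m ≠ r) : IsLeg G m r {z | z ∈ L.tail.support} := by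
  have hL' : ¬L.Nil := Walk.not_nil_of_ne hmr
  have hm : m ∉ L.tail.support := by
    have := hL.support_nodup
    rw [← Walk.cons_support_tail hL', List.nodup_cons] at this
    exact this.1
  exact L.tail.isLeg_support (L.adj_snd hL') hm

lemma rootedK3Minor_of_legs {m x y z : V} {X Y Z : Set V}
    (hX : IsLeg G m x X) (hZ : IsLeg G m z Z) (hXZ : Disjoint X Z)
    (hY : (G.induce Y).Connected) (hmY : m ∈ Y) (hyY : y ∈ Y)
    (hXY : Disjoint X Y) (hYZ : Disjoint Y Z)
    {p q : V} (S : G.Walk x p) (hpq : G.Adj p q) (hq : q ∈ Z) (hS : ∀ v ∈ S.support, v ∉ Y ∪ Z) :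
    RootedK3Minor G x y z := by
  obtain ⟨x', hx', hmx'⟩ := hX.exists_adj
  obtain ⟨z', hz', hmz'⟩ := hZ.exists_adj
  refine ⟨X ∪ {v | v ∈ S.support}, Y, Z, Or.inl hX.mem, hyY, hZ.mem,
    induce_union_connected hX.connected.preconnected S.connected_induce_support.preconnected
      ⟨x, hX.mem, S.start_mem_support⟩, hY, hZ.connected, ?_, ?_, hYZ,
    ⟨x', Or.inl hx', m, hmY, hmx'.symm⟩, ⟨p, Or.inr S.end_mem_support, q, hq, hpq⟩,
    ⟨m, hmY, z', hz', hmz'⟩⟩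
  · exact Set.disjoint_union_left.2 ⟨hXY, Set.disjoint_left.2 fun v hv hvY => hS v hv (.inl hvY)⟩
  · exact Set.disjoint_union_left.2 ⟨hXZ, Set.disjoint_left.2 fun v hv hvZ => hS v hv (.inr hvZ)⟩

structure IsClaw (G : SimpleGraph V) (m a b c : V) (A B C : Set V) : Prop where
  leg₁ : IsLeg G m a A
  leg₂ : IsLeg G m b B
  leg₃ : IsLeg G m c C
  disjoint₁₂ : Disjoint A B
  disjoint₁₃ : Disjoint A C
  disjoint₂₃ : Disjoint B C

namespace IsClaw

variable {m a b c : V} {A B C : Set V}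

lemma swap₁₂ (h : IsClaw G m a b c A B C) : IsClaw G m b a c B A C :=
  ⟨h.leg₂, h.leg₁, h.leg₃, h.disjoint₁₂.symm, h.disjoint₂₃, h.disjoint₁₃⟩

lemma swap₂₃ (h : IsClaw G m a b c A B C) : IsClaw G m a c b A C B :=
  ⟨h.leg₁, h.leg₃, h.leg₂, h.disjoint₁₃, h.disjoint₁₂, h.disjoint₂₃.symm⟩

lemma rootedK3Minor_of_adj_mem_leg₃ (h : IsClaw G m a b c A B C) {p y : V} (S : G.Walk a p)
    (hpy : G.Adj p y) (hy : y ∈ C) (hS : ∀ v ∈ S.support, v ∉ insert m (B ∪ C)) :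
    RootedK3Minor G a b c := by
  obtain ⟨x, hxB, hmx⟩ := h.leg₂.exists_adj
  refine rootedK3Minor_of_legs h.leg₁ h.leg₃ h.disjoint₁₃
    (connected_induce_insert h.leg₂.connected hxB hmx) (Set.mem_insert m B)
    (Set.mem_insert_of_mem m h.leg₂.mem)
    (Set.disjoint_insert_right.2 ⟨h.leg₁.center_notMem, h.disjoint₁₂⟩)
    (Set.disjoint_insert_left.2 ⟨h.leg₃.center_notMem, h.disjoint₂₃⟩) S hpy hy ?_
  rwa [Set.insert_union]

lemma rootedK3Minor (h : IsClaw G m a b c A B C) {u : V} (R : G.Walk a u) (hu : u ∈ B ∪ C)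
    (hR : m ∉ R.support) : RootedK3Minor G a b c := by
  have haBC : a ∉ B ∪ C := fun ha' => ha'.elim (h.disjoint₁₂.notMem_of_mem_left h.leg₁.mem)
    (h.disjoint₁₃.notMem_of_mem_left h.leg₁.mem)
  obtain ⟨p, y, S, hpy, hy, hSt, hSR, -⟩ := R.exists_walk_outside_adj_mem (B ∪ C) hu haBC
  have hS : ∀ v ∈ S.support, v ∉ insert m (B ∪ C) := by
    rintro v hv (rfl | hvt)
    exacts [hR (hSR hv), hSt v hv hvt]
  rcases hy with hyB | hyC
  · exact (h.swap₂₃.rootedK3Minor_of_adj_mem_leg₃ S hpy hyB (by rwa [Set.union_comm])).swap₂₃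
  · exact h.rootedK3Minor_of_adj_mem_leg₃ S hpy hyC hS

lemma rootedK3Minor_of_exists_walk (h : IsClaw G m a b c A B C)
    (hw : ∃ x ∈ ({a, b, c} : Set V), ∃ y ∈ ({a, b, c} : Set V), x ≠ y ∧
      ∃ w : G.Walk x y, m ∉ w.support) : RootedK3Minor G a b c := by
  obtain ⟨x, hx, y, hy, hxy, R, hR⟩ := hw
  have ha := h.leg₁.mem
  have hb := h.leg₂.mem
  have hc := h.leg₃.mem
  rcases hx with rfl | rfl | rfl <;> rcases hy with rfl | rfl | rfl <;>
    first | exact absurd rfl hxy | skip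
  · exact h.rootedK3Minor R (.inl hb) hR
  · exact h.rootedK3Minor R (.inr hc) hR
  · exact (h.swap₁₂.rootedK3Minor R (.inl ha) hR).swap₁₂
  · exact (h.swap₁₂.rootedK3Minor R (.inr hc) hR).swap₁₂
  · exact (h.swap₂₃.swap₁₂.rootedK3Minor R (.inl ha) hR).swap₁₂.swap₂₃
  · exact (h.swap₂₃.swap₁₂.rootedK3Minor R (.inr hb) hR).swap₁₂.swap₂₃

end IsClaw

lemma exists_isClaw_of_isPath [DecidableEq V] {a b c m p : V}
    {P : G.Walk a b} (hP : P.IsPath) (hm : m ∈ P.support) (hma : m ≠ a) (hmb : m ≠ b)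
    (S : G.Walk c p) (hpm : G.Adj p m) (hSP : ∀ z ∈ S.support, z ∉ P.support) :
    ∃ A B C, IsClaw G m a b c A B C := by
  have legA := (hP.takeUntil hm).reverse.isLeg_tail hma
  have hA : ∀ z ∈ (P.takeUntil m hm).reverse.tail.support, z ∈ (P.takeUntil m hm).support :=
    fun z hz => by simpa using (Walk.isSubwalk_rfl _).tail.support_subset hz
  have hB : ∀ z ∈ (P.dropUntil m hm).tail.support, z ∈ (P.dropUntil m hm).support :=
    fun z hz => (Walk.isSubwalk_rfl _).tail.support_subset hz
  have hC : ∀ z ∈ S.reverse.support, z ∉ P.support := fun z hz => hSP z (by simpa using hz)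
  refine ⟨_, _, _, legA, (hP.dropUntil hm).isLeg_tail hmb,
    S.reverse.isLeg_support hpm.symm fun h => hC m h hm, ?_, ?_, ?_⟩
  · refine Set.disjoint_left.2 fun z hzA hzB => legA.center_notMem ?_
    obtain rfl := hP.eq_of_mem_takeUntil_of_mem_dropUntil hm (hA z hzA) (hB z hzB)
    exact hzA
  · exact Set.disjoint_left.2 fun z hzA hzC =>
      hC z hzC (P.support_takeUntil_subset_support hm (hA z hzA))
  · exact Set.disjoint_left.2 fun z hzB hzC =>
      hC z hzC (P.support_dropUntil_subset_support hm (hB z hzB))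

lemma rootedK3Minor_of_isPath_of_adj {a b c p : V} {P : G.Walk a b}
    (hP : P.IsPath) (hab : a ≠ b) (S : G.Walk c p) (hpa : G.Adj p a)
    (hSP : ∀ z ∈ S.support, z ∉ P.support) (R : G.Walk b c) (haR : a ∉ R.support) :
    RootedK3Minor G a b c := by
  have legB := hP.isLeg_tail hab
  have hC : ∀ z ∈ S.reverse.support, z ∉ P.support := fun z hz => hSP z (by simpa using hz)
  have legC := S.reverse.isLeg_support hpa.symm fun h => hC a h P.start_mem_support
  have hBC : Disjoint {z | z ∈ P.tail.support} {z | z ∈ S.reverse.support} :=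
    Set.disjoint_left.2 fun z hzB hzC =>
      hC z hzC ((Walk.isSubwalk_rfl _).tail.support_subset hzB)
  obtain ⟨q, y, T, hqy, hy, hTC, hTR, -⟩ :=
    R.exists_walk_outside_adj_mem _ legC.mem (hBC.notMem_of_mem_left legB.mem)
  refine (rootedK3Minor_of_legs (Y := {a}) legB legC hBC .of_subsingleton rfl rfl
    (Set.disjoint_singleton_right.2 legB.center_notMem)
    (Set.disjoint_singleton_left.2 legC.center_notMem) T hqy hy ?_).swap₁₂
  rintro v hv (rfl | hvC)
  exacts [haR (hTR hv), hTC v hv hvC]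

end

theorem rooted_K3_minor_or_cutvertex_general (G : SimpleGraph V) (a b c : V) :
    RootedK3Minor G a b c ∨
    ∃ v : V, ∀ x ∈ ({a, b, c} : Set V), ∀ y ∈ ({a, b, c} : Set V), x ≠ y →
      ∀ (hx : x ∈ ({v}ᶜ : Set V)) (hy : y ∈ ({v}ᶜ : Set V)),
        ¬ (G.induce ({v}ᶜ : Set V)).Reachable ⟨x, hx⟩ ⟨y, hy⟩ := by
  classical
  refine or_iff_not_imp_right.2 fun hsep => ?_
  have joined (v : V) := exists_walk_notMem_support_of_not_separates (not_exists.1 hsep v)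
  obtain ⟨P, hcP⟩ := exists_walk_notMem_support_of_subset (joined c) subset_rfl
  obtain ⟨Q, hbQ⟩ := exists_walk_notMem_support_of_subset (u := c) (u' := a) (joined b)
    (by intro z; simp only [Set.mem_insert_iff, Set.mem_singleton_iff]; tauto)
  obtain ⟨p, m, S, hpm, hmP, hSP, -, hmQ⟩ := Q.exists_walk_outside_adj_mem
    {z | z ∈ P.bypass.support} P.bypass.start_mem_support
    fun h => hcP (P.support_bypass_subset_support h)
  have hmb : m ≠ b := fun h => hbQ (h ▸ hmQ)
  obtain rfl | hma := eq_or_ne m a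
  · obtain ⟨R, hmR⟩ := exists_walk_notMem_support_of_subset (u := b) (u' := c) (joined m)
      (by intro z; simp only [Set.mem_insert_iff, Set.mem_singleton_iff]; tauto)
    exact rootedK3Minor_of_isPath_of_adj P.bypass_isPath hmb S hpm hSP R hmR
  · obtain ⟨A, B, C, hclaw⟩ := exists_isClaw_of_isPath P.bypass_isPath hmP hma hmb S hpm hSP
    exact hclaw.rootedK3Minor_of_exists_walk (joined m)

/-- either `G` has a `K₃`-minor rooted at distinct `a,b,c`, or some
vertex `v` is such that at most one of `a,b,c` lies in each component of `G - v`. -/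
theorem rooted_K3_minor_or_cutvertex (G : SimpleGraph V) (a b c : V)
    (hab : a ≠ b) (hac : a ≠ c) (hbc : b ≠ c) :
    RootedK3Minor G a b c ∨
    ∃ v : V, ∀ x ∈ ({a, b, c} : Set V), ∀ y ∈ ({a, b, c} : Set V), x ≠ y →
      ∀ (hx : x ∈ ({v}ᶜ : Set V)) (hy : y ∈ ({v}ᶜ : Set V)),
        ¬ (G.induce ({v}ᶜ : Set V)).Reachable ⟨x, hx⟩ ⟨y, hy⟩ :=
  rooted_K3_minor_or_cutvertex_general G a b c
end

section
/- Let G be a connected graph that is a spanning subgraph of an (a,b,c,d)-web, and suppose G contains a K_4-minor rooted at a,b,c,d in which every vertex of G lies in some branch set. Then contracting each edge with both endpoints in the same branch set yields K_4 as an outerplanar graph, a contradiction; hence no such rooted K_4-minor exists. -/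
open SimpleGraph

variable {V : Type*}

/-!
Let `S` be the vertex set of the triangulated disc `H = W[S]` and `T_x ⊆ S` the triangle whose
clique contains a vertex `x ∉ S`. Call `x` itself (if `x ∈ S`) or `T_x` (otherwise) the anchors
of `x`. Every neighbour of `x ∉ S` lies in `T_x` or in the same clique, so anchors of adjacent
vertices coincide or are adjacent in `H`, and every vertex of a connected branch set meeting `S`
has an anchor inside it. Hence the traces on `S` of the branch sets of a rooted `K₄`-minor of `G`
form a `K₄`-minor of `H` rooted at `a, b, c, d`. As `a, b, c, d` lie on a common face, an apex
joined to them extends it to a `K₅`-minor, contradicting planarity.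
-/

namespace SimpleGraph

variable {V' : Type*}

theorem Reachable.map_of_eq_or_adj {G : SimpleGraph V} {H : SimpleGraph V'} {f : V → V'}
    (hf : ∀ ⦃u v⦄, G.Adj u v → f u = f v ∨ H.Adj (f u) (f v)) {u v : V}
    (h : G.Reachable u v) : H.Reachable (f u) (f v) := by
  obtain ⟨p⟩ := h
  induction p with
  | nil => rfl
  | cons huw _ ih => exact (hf huw).elim (fun e => e ▸ ih) fun hadj => hadj.reachable.trans ih

theorem Connected.map_of_eq_or_adj {G : SimpleGraph V} {H : SimpleGraph V'} {f : V → V'}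
    (hf : ∀ ⦃u v⦄, G.Adj u v → f u = f v ∨ H.Adj (f u) (f v)) (hsurj : Function.Surjective f)
    (h : G.Connected) : H.Connected :=
  have hpre : H.Preconnected := fun x y => by
    obtain ⟨u, rfl⟩ := hsurj x
    obtain ⟨v, rfl⟩ := hsurj y
    exact (h u v).map_of_eq_or_adj hf
  have : Nonempty V' := h.nonempty.map f
  ⟨hpre⟩

theorem Connected.induce_image {G : SimpleGraph V} {H : SimpleGraph V'} (f : G →g H) {s : Set V}
    (h : (G.induce s).Connected) : (H.induce (f '' s)).Connected :=
  h.map (induceHom f (Set.mapsTo_image f s)) (Set.surjective_mapsTo_image_restrict f s)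

theorem hasGraphMinor_top_of_lt {ι : Type*} [LinearOrder ι] {G : SimpleGraph V} (B : ι → Set V)
    (hne : ∀ i, (B i).Nonempty) (hconn : ∀ i, (G.induce (B i)).Connected)
    (hlt : ∀ ⦃i j⦄, i < j → Disjoint (B i) (B j) ∧ ∃ x ∈ B i, ∃ y ∈ B j, G.Adj x y) :
    HasGraphMinor G (⊤ : SimpleGraph ι) := by
  refine ⟨B, hne, hconn, (pairwise_disjoint_on B).2 fun i j hij => (hlt hij).1, ?_⟩
  intro i j hij
  rcases (top_adj i j |>.1 hij).lt_or_gt with h | h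
  · exact (hlt h).2
  · obtain ⟨x, hx, y, hy, hxy⟩ := (hlt h).2
    exact ⟨y, hy, x, hx, hxy.symm⟩

end SimpleGraph

section Apex

variable {U : Type*}

def Apex.inclusion (H : SimpleGraph U) (s : Set U) : H →g Apex H s :=
  ⟨some, fun h => Or.inl ⟨_, _, rfl, rfl, h⟩⟩

theorem RootedK4MinorOn.hasGraphMinor_apex {H : SimpleGraph U} {p q r s : U} {A B C D : Set U}
    (h : RootedK4MinorOn H p q r s A B C D) :
    HasGraphMinor (Apex H {p, q, r, s}) (⊤ : SimpleGraph (Fin 5)) := by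
  obtain ⟨hp, hq, hr, hs, cA, cB, cC, cD, dAB, dAC, dAD, dBC, dBD, dCD,
    eAB, eAC, eAD, eBC, eBD, eCD⟩ := h
  have disj {X Y : Set U} (h : Disjoint X Y) : Disjoint (some '' X) (some '' Y) :=
    (Set.disjoint_image_iff (Option.some_injective U)).2 h
  have disj_apex (X : Set U) : Disjoint (some '' X) {none} := by simp
  have edge {X Y : Set U} : (∃ x ∈ X, ∃ y ∈ Y, H.Adj x y) →
      ∃ x ∈ some '' X, ∃ y ∈ some '' Y, (Apex H {p, q, r, s}).Adj x y := by
    rintro ⟨x, hx, y, hy, hxy⟩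
    exact ⟨_, Set.mem_image_of_mem _ hx, _, Set.mem_image_of_mem _ hy,
      (Apex.inclusion H _).map_adj hxy⟩
  have edge_apex {X : Set U} {x : U} (hx : x ∈ X) (hroot : x ∈ ({p, q, r, s} : Set U)) :
      ∃ x ∈ some '' X, ∃ y ∈ ({none} : Set (Option U)), (Apex H {p, q, r, s}).Adj x y :=
    ⟨_, Set.mem_image_of_mem _ hx, none, rfl, Or.inr (Or.inl ⟨x, rfl, rfl, hroot⟩)⟩
  refine hasGraphMinor_top_of_lt ![some '' A, some '' B, some '' C, some '' D, {none}]
    ?_ ?_ fun i j hij => ?_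
  · intro i
    fin_cases i
    exacts [⟨_, Set.mem_image_of_mem _ hp⟩, ⟨_, Set.mem_image_of_mem _ hq⟩,
      ⟨_, Set.mem_image_of_mem _ hr⟩, ⟨_, Set.mem_image_of_mem _ hs⟩, Set.singleton_nonempty _]
  · intro i
    fin_cases i
    exacts [cA.induce_image (Apex.inclusion H _), cB.induce_image (Apex.inclusion H _),
      cC.induce_image (Apex.inclusion H _), cD.induce_image (Apex.inclusion H _), by simp]
  fin_cases i <;> fin_cases j <;> simp only [Fin.reduceFinMk, Fin.reduceLT] at hij
  exacts [⟨disj dAB, edge eAB⟩, ⟨disj dAC, edge eAC⟩, ⟨disj dAD, edge eAD⟩,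
    ⟨disj_apex A, edge_apex hp (by simp)⟩, ⟨disj dBC, edge eBC⟩, ⟨disj dBD, edge eBD⟩,
    ⟨disj_apex B, edge_apex hq (by simp)⟩, ⟨disj dCD, edge eCD⟩,
    ⟨disj_apex C, edge_apex hr (by simp)⟩, ⟨disj_apex D, edge_apex hs (by simp)⟩]

theorem IsQuadTriangulation.isPlanar_apex {H : SimpleGraph U} {p q r s : U}
    (h : IsQuadTriangulation H p q r s) : IsPlanar (Apex H {p, q, r, s}) :=
  h.2.2.2.2.2.2.2.2.2.2.2.1

end Apex

namespace CliqueExpansion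

variable {G W : SimpleGraph V} {S : Set V} {t : V → Finset V} {x y u v : V}

open Classical in
def anchors (S : Set V) (t : V → Finset V) (x : V) : Set V :=
  if x ∈ S then {x} else ↑(t x)

theorem anchors_of_mem (hx : x ∈ S) : anchors S t x = {x} := if_pos hx

theorem anchors_of_notMem (hx : x ∉ S) : anchors S t x = ↑(t x) := if_neg hx

variable (hCE : CliqueExpansion W S t)
include hCE

theorem mem_of_adj (hx : x ∉ S) (hy : y ∈ S) (hxy : W.Adj x y) : y ∈ t x :=
  ((hCE x hx).2.2.2 y |>.1 hxy).resolve_right fun h => h.1 hy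

theorem eq_of_adj (hx : x ∉ S) (hy : y ∉ S) (hxy : W.Adj x y) : t y = t x := by
  rcases (hCE x hx).2.2.2 y |>.1 hxy with h | h
  · exact absurd ((hCE x hx).1 h) hy
  · exact h.2.2

theorem eq_or_adj_of_mem (hx : x ∉ S) (hu : u ∈ t x) (hv : v ∈ t x) : u = v ∨ W.Adj u v :=
  or_iff_not_imp_left.2 ((hCE x hx).2.2.1 u hu v hv)

theorem anchors_subset (x : V) : anchors S t x ⊆ S := by
  by_cases hx : x ∈ S
  · simpa [anchors_of_mem hx]
  · simpa [anchors_of_notMem hx] using (hCE x hx).1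

theorem anchors_subset_of_adj (hx : x ∉ S) (hxy : W.Adj x y) :
    anchors S t y ⊆ anchors S t x := by
  rw [anchors_of_notMem hx]
  by_cases hy : y ∈ S
  · simpa [anchors_of_mem hy] using hCE.mem_of_adj hx hy hxy
  · rw [anchors_of_notMem hy, hCE.eq_of_adj hx hy hxy]

theorem eq_or_adj_of_mem_anchors (hxy : W.Adj x y) (hu : u ∈ anchors S t x)
    (hv : v ∈ anchors S t y) : u = v ∨ W.Adj u v := by
  by_cases hx : x ∈ S
  · by_cases hy : y ∈ S
    · rw [anchors_of_mem hx] at hu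
      rw [anchors_of_mem hy] at hv
      exact .inr (hu ▸ hv ▸ hxy)
    · have hu' := hCE.anchors_subset_of_adj hy hxy.symm hu
      rw [anchors_of_notMem hy] at hu' hv
      exact hCE.eq_or_adj_of_mem hy hu' hv
  · have hv' := hCE.anchors_subset_of_adj hx hxy hv
    rw [anchors_of_notMem hx] at hu hv'
    exact hCE.eq_or_adj_of_mem hx hu hv'

theorem exists_mem_anchors_of_reachable (hle : G ≤ W) {Z : Set V} {x y : Z}
    (h : (G.induce Z).Reachable x y) (hy : ↑y ∈ S) : ∃ u ∈ anchors S t x, u ∈ Z := by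
  obtain ⟨p⟩ := h
  induction p with
  | @nil y => exact ⟨y, by simp [anchors_of_mem hy], y.2⟩
  | @cons x x' _ hxx' _ ih =>
    by_cases hx : ↑x ∈ S
    · exact ⟨x, by simp [anchors_of_mem hx], x.2⟩
    · obtain ⟨u, hu, huZ⟩ := ih hy
      exact ⟨u, hCE.anchors_subset_of_adj hx (hle hxx') hu, huZ⟩

theorem exists_mem_anchors_of_connected (hle : G ≤ W) {Z : Set V} {z : V}
    (hZ : (G.induce Z).Connected) (hz : z ∈ Z) (hzS : z ∈ S) :
    ∀ x ∈ Z, ∃ u ∈ anchors S t x, u ∈ Z := fun x hx =>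
  hCE.exists_mem_anchors_of_reachable hle (x := ⟨x, hx⟩) (hZ.preconnected _ ⟨z, hz⟩) hzS

theorem connected_induce_preimage (hle : G ≤ W) {Z : Set V} {z : V}
    (hZ : (G.induce Z).Connected) (hz : z ∈ Z) (hzS : z ∈ S) :
    ((W.induce S).induce (Subtype.val ⁻¹' Z)).Connected := by
  choose π hπ hπZ using hCE.exists_mem_anchors_of_connected hle hZ hz hzS
  let f : Z → (Subtype.val ⁻¹' Z : Set S) := fun x =>
    ⟨⟨π x x.2, hCE.anchors_subset x (hπ x x.2)⟩, hπZ x x.2⟩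
  refine Connected.map_of_eq_or_adj (f := f) (fun x y hxy => ?_) (fun v => ?_) hZ
  · rcases hCE.eq_or_adj_of_mem_anchors (hle hxy) (hπ x x.2) (hπ y y.2) with h | h
    · exact .inl (Subtype.ext (Subtype.ext h))
    · exact .inr h
  · refine ⟨⟨v, v.2⟩, Subtype.ext (Subtype.ext ?_)⟩
    simpa [anchors_of_mem v.1.2] using hπ v v.2

theorem exists_adj_induce_of_adj (hle : G ≤ W) {Z Z' : Set V} (hd : Disjoint Z Z')
    (hZ : ∀ x ∈ Z, ∃ u ∈ anchors S t x, u ∈ Z) (hZ' : ∀ x ∈ Z', ∃ u ∈ anchors S t x, u ∈ Z')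
    (he : ∃ x ∈ Z, ∃ y ∈ Z', G.Adj x y) :
    ∃ u ∈ (Subtype.val ⁻¹' Z : Set S), ∃ v ∈ (Subtype.val ⁻¹' Z' : Set S),
      (W.induce S).Adj u v := by
  obtain ⟨x, hx, y, hy, hxy⟩ := he
  obtain ⟨u, hu, huZ⟩ := hZ x hx
  obtain ⟨v, hv, hvZ⟩ := hZ' y hy
  have huv : u ≠ v := fun h => hd.ne_of_mem huZ hvZ h
  exact ⟨⟨u, hCE.anchors_subset x hu⟩, huZ, ⟨v, hCE.anchors_subset y hv⟩, hvZ,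
    (hCE.eq_or_adj_of_mem_anchors (hle hxy) hu hv).resolve_left huv⟩

theorem rootedK4MinorOn_induce (hle : G ≤ W) {a b c d : V} {A B C D : Set V}
    (h : RootedK4MinorOn G a b c d A B C D) (ha : a ∈ S) (hb : b ∈ S) (hc : c ∈ S)
    (hd : d ∈ S) :
    RootedK4MinorOn (W.induce S) ⟨a, ha⟩ ⟨b, hb⟩ ⟨c, hc⟩ ⟨d, hd⟩ (Subtype.val ⁻¹' A)
      (Subtype.val ⁻¹' B) (Subtype.val ⁻¹' C) (Subtype.val ⁻¹' D) := by
  obtain ⟨haA, hbB, hcC, hdD, cA, cB, cC, cD, dAB, dAC, dAD, dBC, dBD, dCD,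
    eAB, eAC, eAD, eBC, eBD, eCD⟩ := h
  have tA := hCE.exists_mem_anchors_of_connected hle cA haA ha
  have tB := hCE.exists_mem_anchors_of_connected hle cB hbB hb
  have tC := hCE.exists_mem_anchors_of_connected hle cC hcC hc
  have tD := hCE.exists_mem_anchors_of_connected hle cD hdD hd
  exact ⟨haA, hbB, hcC, hdD,
    hCE.connected_induce_preimage hle cA haA ha, hCE.connected_induce_preimage hle cB hbB hb,
    hCE.connected_induce_preimage hle cC hcC hc, hCE.connected_induce_preimage hle cD hdD hd,
    dAB.preimage _, dAC.preimage _, dAD.preimage _, dBC.preimage _, dBD.preimage _,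
    dCD.preimage _,
    hCE.exists_adj_induce_of_adj hle dAB tA tB eAB, hCE.exists_adj_induce_of_adj hle dAC tA tC eAC,
    hCE.exists_adj_induce_of_adj hle dAD tA tD eAD, hCE.exists_adj_induce_of_adj hle dBC tB tC eBC,
    hCE.exists_adj_induce_of_adj hle dBD tB tD eBD, hCE.exists_adj_induce_of_adj hle dCD tC tD eCD⟩

end CliqueExpansion

theorem web_no_spanning_rooted_K4_minor_general (G W : SimpleGraph V) (a b c d : V)
    (hle : G ≤ W) (hW : IsWeb W a b c d) :
    ¬ ∃ A B C D : Set V,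
        RootedK4MinorOn G a b c d A B C D ∧ A ∪ B ∪ C ∪ D = Set.univ := by
  rintro ⟨A, B, C, D, hK4, -⟩
  obtain ⟨S, ha, hb, hc, hd, hQT, t, hCE⟩ := hW
  exact hQT.isPlanar_apex.1 (hCE.rootedK4MinorOn_induce hle hK4 ha hb hc hd).hasGraphMinor_apex

/-- a connected spanning subgraph of an `(a,b,c,d)`-web has no
`K₄`-minor rooted at `a,b,c,d` in which every vertex lies in some branch set. -/
theorem web_no_spanning_rooted_K4_minor (G W : SimpleGraph V) (a b c d : V)
    (hG : G.Connected) (hle : G ≤ W) (hW : IsWeb W a b c d) :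
    ¬ ∃ A B C D : Set V,
        RootedK4MinorOn G a b c d A B C D ∧ A ∪ B ∪ C ∪ D = Set.univ :=
  web_no_spanning_rooted_K4_minor_general G W a b c d hle hW
end

section
/- Every planar triangulation G contains a K_4-minor rooted at a, b, c, d for every choice of four distinct vertices a, b, c, d of G. -/
/-!
A planar graph has no `K₅`-minor, and a `K₅`-minor-free graph with `3n - 6` edges has a
`K₄`-minor rooted at any four vertices, by induction on `n`. Contracting an edge `uw` with `w` not
a root that lies in at most two triangles loses at most three edges, so the contracted graph
again has `3(n - 1) - 6` edges, and a rooted `K₄`-minor of it lifts back. Otherwise every edge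
leaving the roots lies in three triangles. Mader's bound `|E| ≤ 3n - 6` for `K₅`-minor-free
graphs, proved by the same contractions, forces minimum degree three, and a non-root of degree at
most five would carry a `K₅`-minor on its closed neighbourhood, so non-roots have degree at least
six. Summing degrees, `2(3n - 6) ≥ 6(n - 4) + Σ deg(root)`, so every root has degree three, all
its neighbours are roots, and the roots span a `K₄`.
-/

open SimpleGraph

variable {V : Type*}

local notation "K₅" => (⊤ : SimpleGraph (Fin 5))

namespace SimpleGraph

variable {W : Type*} {G : SimpleGraph V} {H : SimpleGraph W}

lemma connected_induce_singleton (G : SimpleGraph V) (x : V) : (G.induce {x}).Connected := by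
  rw [induce_singleton_eq_top]
  exact connected_top

lemma connected_induce_image (f : G →g H) {s : Set V} (hs : (G.induce s).Connected) :
    (H.induce (f '' s)).Connected :=
  hs.map (⟨fun x => ⟨f x, Set.mem_image_of_mem f x.2⟩, fun h => f.map_adj h⟩ :
      G.induce s →g H.induce (f '' s))
    (by rintro ⟨_, x, hx, rfl⟩; exact ⟨⟨x, hx⟩, rfl⟩)

end SimpleGraph

section minor

variable {W X : Type*} {G : SimpleGraph V} {H : SimpleGraph W} {K : SimpleGraph X}

lemma hasGraphMinor_refl (H : SimpleGraph W) : HasGraphMinor H H :=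
  ⟨fun w => {w}, fun w => Set.singleton_nonempty w, fun w => connected_induce_singleton H w,
    fun _ _ h => Set.disjoint_singleton.mpr h, fun w w' h => ⟨w, rfl, w', rfl, h⟩⟩

lemma HasGraphMinor.map (f : Copy G H) (h : HasGraphMinor G K) : HasGraphMinor H K := by
  obtain ⟨B, hne, hconn, hdisj, hadj⟩ := h
  refine ⟨fun x => f '' B x, fun x => (hne x).image f,
    fun x => connected_induce_image f.toHom (hconn x),
    fun x y hxy => (Set.disjoint_image_iff f.injective).mpr (hdisj hxy), fun x y hxy => ?_⟩
  obtain ⟨a, ha, b, hb, hab⟩ := hadj hxy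
  exact ⟨f a, Set.mem_image_of_mem f ha, f b, Set.mem_image_of_mem f hb, f.toHom.map_adj hab⟩

end minor

namespace SimpleGraph

variable {W X : Type*} {G : SimpleGraph V} {H : SimpleGraph W} {K : SimpleGraph X}

lemma IsContained.hasGraphMinor (h : H ⊑ G) : HasGraphMinor G H :=
  (hasGraphMinor_refl H).map h.some

lemma IsClique.hasGraphMinor_top [Finite V] {s : Set V} {n : ℕ} (hs : G.IsClique s)
    (hn : s.ncard = n) : HasGraphMinor G (⊤ : SimpleGraph (Fin n)) := by
  let e : Fin n ≃ s := (Finite.equivFinOfCardEq (by rwa [Nat.card_coe_set_eq])).symm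
  refine IsContained.hasGraphMinor ⟨⟨⟨fun i => e i, fun {i j} hij => ?_⟩, ?_⟩⟩
  · exact hs (e i).2 (e j).2 fun h => hij (e.injective (Subtype.ext h))
  · exact Subtype.val_injective.comp e.injective

/-- The fibres of `f` are the branch sets of a model of `H` in `G`. -/
structure IsContractionMap (G : SimpleGraph V) (H : SimpleGraph W) (f : V → W) : Prop where
  connected_fiber (w : W) : (G.induce (f ⁻¹' {w})).Connected
  exists_adj_of_adj ⦃x y : W⦄ : H.Adj x y → ∃ a b, G.Adj a b ∧ f a = x ∧ f b = y

namespace IsContractionMap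

variable {f : V → W}

lemma connected_induce_preimage (hf : IsContractionMap G H f) {s : Set W}
    (hs : (H.induce s).Connected) : (G.induce (f ⁻¹' s)).Connected := by
  have fiber : ∀ {a b : V} (ha : f a ∈ s) (hab : f a = f b),
      (G.induce (f ⁻¹' s)).Reachable ⟨a, ha⟩ ⟨b, show f b ∈ s from hab ▸ ha⟩ :=
    fun {a b} ha hab => ((hf.connected_fiber (f a)).preconnected ⟨a, rfl⟩ ⟨b, hab.symm⟩).map
      (induceHomOfLE G (Set.preimage_mono (Set.singleton_subset_iff.mpr ha))).toHom
  obtain ⟨x₀⟩ := hs.nonempty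
  obtain ⟨⟨a₀, ha₀⟩⟩ := (hf.connected_fiber x₀).nonempty
  have ha₀s : f a₀ ∈ s := ha₀ ▸ x₀.2
  suffices h : ∀ y : s, Relation.ReflTransGen (H.induce s).Adj x₀ y →
      ∀ b (hb : f b = y), (G.induce (f ⁻¹' s)).Reachable ⟨a₀, ha₀s⟩
        ⟨b, show f b ∈ s from hb ▸ y.2⟩ by
    rw [connected_iff_exists_forall_reachable]
    exact ⟨⟨a₀, ha₀s⟩, fun b => h ⟨f b, b.2⟩
      ((reachable_iff_reflTransGen _ _).mp (hs.preconnected _ _)) b rfl⟩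
  intro y hy
  induction hy with
  | refl => exact fun b hb => fiber ha₀s (ha₀.trans hb.symm)
  | tail _ hyz ih =>
    intro b hb
    obtain ⟨c, d, hcd, hc, hd⟩ := hf.exists_adj_of_adj hyz
    have hstep : (G.induce (f ⁻¹' s)).Adj ⟨c, show f c ∈ s from hc ▸ Subtype.property _⟩
        ⟨d, show f d ∈ s from hd ▸ Subtype.property _⟩ := hcd
    exact ((ih c hc).trans hstep.reachable).trans (fiber _ (hd.trans hb.symm))

lemma exists_adj_preimage (hf : IsContractionMap G H f) {s t : Set W}
    (h : ∃ x ∈ s, ∃ y ∈ t, H.Adj x y) :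
    ∃ a ∈ f ⁻¹' s, ∃ b ∈ f ⁻¹' t, G.Adj a b := by
  obtain ⟨x, hx, y, hy, hxy⟩ := h
  obtain ⟨a, b, hab, rfl, rfl⟩ := hf.exists_adj_of_adj hxy
  exact ⟨a, hx, b, hy, hab⟩

lemma hasGraphMinor (hf : IsContractionMap G H f) (h : HasGraphMinor H K) : HasGraphMinor G K := by
  obtain ⟨B, -, hconn, hdisj, hadj⟩ := h
  exact ⟨fun x => f ⁻¹' B x,
    fun x => Set.nonempty_coe_sort.mp (hf.connected_induce_preimage (hconn x)).nonempty,
    fun x => hf.connected_induce_preimage (hconn x), fun x y hxy => (hdisj hxy).preimage f,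
    fun x y hxy => hf.exists_adj_preimage (hadj hxy)⟩

lemma rootedK4Minor (hf : IsContractionMap G H f) {a b c d : V}
    (h : RootedK4Minor H (f a) (f b) (f c) (f d)) :
    RootedK4Minor G a b c d := by
  obtain ⟨A, B, C, D, ha, hb, hc, hd, cA, cB, cC, cD, dAB, dAC, dAD, dBC, dBD, dCD,
    eAB, eAC, eAD, eBC, eBD, eCD⟩ := h
  exact ⟨f ⁻¹' A, f ⁻¹' B, f ⁻¹' C, f ⁻¹' D, ha, hb, hc, hd,
    hf.connected_induce_preimage cA, hf.connected_induce_preimage cB,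
    hf.connected_induce_preimage cC, hf.connected_induce_preimage cD,
    dAB.preimage f, dAC.preimage f, dAD.preimage f, dBC.preimage f, dBD.preimage f,
    dCD.preimage f, hf.exists_adj_preimage eAB, hf.exists_adj_preimage eAC,
    hf.exists_adj_preimage eAD, hf.exists_adj_preimage eBC, hf.exists_adj_preimage eBD,
    hf.exists_adj_preimage eCD⟩

end IsContractionMap

def contractEdge (G : SimpleGraph V) (u v : V) : SimpleGraph ({v}ᶜ : Set V) :=
  fromRel fun x y => G.Adj x y ∨ (x.1 = u ∧ G.Adj v y)

open Classical in
noncomputable def collapse {u v : V} (huv : u ≠ v) (x : V) : ({v}ᶜ : Set V) :=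
  if hx : x = v then ⟨u, huv⟩ else ⟨x, hx⟩

section contractEdge

variable {u v : V}

lemma collapse_of_ne (huv : u ≠ v) {x : V} (hx : x ≠ v) : collapse huv x = ⟨x, hx⟩ :=
  dif_neg hx

lemma collapse_self (huv : u ≠ v) : collapse huv v = ⟨u, huv⟩ :=
  dif_pos rfl

lemma contractEdge_adj_of_adj {a b : V} (ha : a ≠ v) (hb : b ≠ v) (h : G.Adj a b) :
    (contractEdge G u v).Adj ⟨a, ha⟩ ⟨b, hb⟩ :=
  (fromRel_adj _ _ _).mpr ⟨fun e => h.ne (congrArg Subtype.val e), Or.inl (Or.inl h)⟩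

lemma contractEdge_adj_of_adj_right (hu : u ≠ v) {b : V} (hb : b ≠ v) (hub : u ≠ b)
    (h : G.Adj v b) : (contractEdge G u v).Adj ⟨u, hu⟩ ⟨b, hb⟩ :=
  (fromRel_adj _ _ _).mpr ⟨fun e => hub (congrArg Subtype.val e), Or.inl (Or.inr ⟨rfl, h⟩)⟩

lemma induce_le_contractEdge (u v : V) : G.induce {v}ᶜ ≤ contractEdge G u v :=
  fun x y h => contractEdge_adj_of_adj x.2 y.2 h

lemma isContractionMap_collapse (huv : G.Adj u v) :
    IsContractionMap G (contractEdge G u v) (collapse huv.ne) where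
  connected_fiber := by
    rintro ⟨w, hw⟩
    by_cases hwu : w = u
    · subst hwu
      have : collapse huv.ne ⁻¹' {⟨w, hw⟩} = {w, v} := by
        ext x
        by_cases hx : x = v <;> simp [collapse, hx, Subtype.ext_iff]
      rw [this]
      exact induce_pair_connected_of_adj huv
    · have : collapse huv.ne ⁻¹' {⟨w, hw⟩} = {w} := by
        ext x
        have hwv : v ≠ w := Ne.symm hw
        by_cases hx : x = v <;> simp [collapse, hx, Subtype.ext_iff, Ne.symm hwu, hwv]
      rw [this]
      exact connected_induce_singleton G w
  exists_adj_of_adj := by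
    have realize : ∀ x y : ({v}ᶜ : Set V), G.Adj x y ∨ (x.1 = u ∧ G.Adj v y) →
        ∃ a b, G.Adj a b ∧ collapse huv.ne a = x ∧ collapse huv.ne b = y := by
      rintro ⟨x, hx⟩ ⟨y, hy⟩ (h | ⟨rfl, h⟩)
      · exact ⟨x, y, h, collapse_of_ne _ hx, collapse_of_ne _ hy⟩
      · exact ⟨v, y, h, collapse_self _, collapse_of_ne _ hy⟩
    rintro x y ⟨-, h | h⟩
    · exact realize x y h
    · obtain ⟨a, b, hab, ha, hb⟩ := realize y x h
      exact ⟨b, a, hab.symm, hb, ha⟩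

end contractEdge

section counting

lemma sum_ncard_neighborSet [Fintype V] (G : SimpleGraph V) :
    ∑ v, (G.neighborSet v).ncard = 2 * G.edgeSet.ncard := by
  classical
  simp only [Set.ncard_eq_toFinset_card']
  exact G.sum_degrees_eq_twice_card_edges

variable [Finite V]

lemma natCard_compl_singleton_add_one (v : V) : Nat.card ({v}ᶜ : Set V) + 1 = Nat.card V := by
  have : 0 < Nat.card V := Nat.card_pos_iff.mpr ⟨⟨v⟩, inferInstance⟩
  rw [Nat.card_coe_set_eq, Set.ncard_compl, Set.ncard_singleton]
  omega

lemma ncard_edgeSet_le_choose_two (G : SimpleGraph V) :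
    G.edgeSet.ncard ≤ (Nat.card V).choose 2 := by
  classical
  cases nonempty_fintype V
  rw [Set.ncard_eq_toFinset_card', Nat.card_eq_fintype_card]
  exact card_edgeFinset_le_card_choose_two

lemma exists_le_ncard_edgeSet_eq {k : ℕ} (hk : k ≤ G.edgeSet.ncard) :
    ∃ G' ≤ G, G'.edgeSet.ncard = k := by
  obtain ⟨s, hs, hcard⟩ := Set.exists_subset_card_eq (s := G.edgeSet) (Nat.sub_le _ k)
  refine ⟨G.deleteEdges s, deleteEdges_le s, ?_⟩
  rw [edgeSet_deleteEdges, Set.ncard_sdiff hs, hcard]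
  omega

lemma ncard_inter_neighborSet_lt {u v : V} (h : G.Adj v u) :
    (G.neighborSet v ∩ G.neighborSet u).ncard < (G.neighborSet v).ncard :=
  Set.ncard_lt_ncard <| (Set.ssubset_iff_of_subset Set.inter_subset_left).mpr
    ⟨u, h, fun hu => G.loopless.irrefl u hu.2⟩

lemma ncard_edgeSet_le_induce_compl_add (G : SimpleGraph V) (v : V) :
    G.edgeSet.ncard ≤ (G.induce {v}ᶜ).edgeSet.ncard + (G.neighborSet v).ncard := by
  classical
  have hsub :
      G.edgeSet ⊆ Sym2.map Subtype.val '' (G.induce {v}ᶜ).edgeSet ∪ G.incidenceSet v := by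
    intro e he
    induction e using Sym2.ind with
    | _ x y =>
      by_cases hx : x = v
      · exact Or.inr ⟨he, hx ▸ Sym2.mem_mk_left x y⟩
      by_cases hy : y = v
      · exact Or.inr ⟨he, hy ▸ Sym2.mem_mk_right x y⟩
      exact Or.inl ⟨s(⟨x, hx⟩, ⟨y, hy⟩), he, rfl⟩
  have hinc : (G.incidenceSet v).ncard = (G.neighborSet v).ncard := by
    rw [← Nat.card_coe_set_eq, ← Nat.card_coe_set_eq]
    exact Nat.card_congr (G.incidenceSetEquivNeighborSet v)
  calc G.edgeSet.ncard ≤ _ := Set.ncard_le_ncard hsub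
    _ ≤ _ := Set.ncard_union_le _ _
    _ ≤ _ := by rw [hinc]; exact Nat.add_le_add_right Set.ncard_image_le _

/-- Contracting `uv` loses the edge `uv` and one edge of each triangle on `uv`. -/
lemma ncard_edgeSet_le_contractEdge {u v : V} (huv : G.Adj u v) :
    G.edgeSet.ncard ≤
      (contractEdge G u v).edgeSet.ncard + 1 + (G.neighborSet u ∩ G.neighborSet v).ncard := by
  set N := G.neighborSet v \ insert u (G.neighborSet u)
  set star := (fun w => s(⟨u, huv.ne⟩, w)) '' (Subtype.val ⁻¹' N : Set ({v}ᶜ : Set V))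
  have hstar : star.ncard = N.ncard := by
    rw [Set.ncard_image_of_injective _ fun _ _ h => Sym2.congr_right.mp h,
      Set.ncard_preimage_of_injective_subset_range Subtype.val_injective]
    rintro w ⟨hw, -⟩
    exact ⟨⟨w, (G.ne_of_adj hw).symm⟩, rfl⟩
  have hdisj : Disjoint (G.induce {v}ᶜ).edgeSet star := by
    rw [Set.disjoint_right]
    rintro _ ⟨w, ⟨-, hw⟩, rfl⟩ h
    exact hw (Or.inr h)
  have hsub : (G.induce {v}ᶜ).edgeSet ∪ star ⊆ (contractEdge G u v).edgeSet := by
    rintro _ (he | ⟨w, ⟨hvw, hw⟩, rfl⟩)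
    · exact edgeSet_mono (induce_le_contractEdge u v) he
    · exact contractEdge_adj_of_adj_right huv.ne w.2 (fun h => hw (Or.inl h.symm)) hvw
  have hN :
      (G.neighborSet v).ncard ≤ N.ncard + 1 + (G.neighborSet u ∩ G.neighborSet v).ncard := by
    have hsplit : (G.neighborSet v ∩ insert u (G.neighborSet u)).ncard + N.ncard =
        (G.neighborSet v).ncard := Set.ncard_inter_add_ncard_sdiff_eq_ncard _ _
    have hcommon : G.neighborSet v ∩ insert u (G.neighborSet u) ⊆
        insert u (G.neighborSet u ∩ G.neighborSet v) := by
      rintro w ⟨hv, rfl | hu⟩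
      exacts [Or.inl rfl, Or.inr ⟨hu, hv⟩]
    have := (Set.ncard_le_ncard hcommon).trans (Set.ncard_insert_le _ _)
    omega
  have hdel := ncard_edgeSet_le_induce_compl_add G v
  have hcontr := Set.ncard_le_ncard hsub
  rw [Set.ncard_union_eq hdisj, hstar] at hcontr
  omega

end counting

section K5

variable [Finite V]

lemma hasGraphMinor_K5_of_isClique {v x : V} {r : Set V} (hr : G.IsClique r) (hr3 : r.ncard = 3)
    (hvx : G.Adj v x) (hv : ∀ b ∈ r, G.Adj v b) (hx : ∀ b ∈ r, G.Adj x b) :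
    HasGraphMinor G K₅ := by
  have hxr : x ∉ r := fun h => (hx x h).ne rfl
  have hvr : v ∉ insert x r := by
    rintro (rfl | h)
    exacts [hvx.ne rfl, (hv v h).ne rfl]
  refine ((hr.insert fun b hb _ => hx b hb).insert (a := v) ?_).hasGraphMinor_top ?_
  · rintro b (rfl | hb) -
    exacts [hvx, hv b hb]
  · rw [Set.ncard_insert_of_notMem hvr, Set.ncard_insert_of_notMem hxr, hr3]

/-- Contracting `xq` turns `{v, x, y, p, z}` into a `K₅`. -/
lemma hasGraphMinor_K5_of_contractEdge {v x y p q z : V} (hvx : G.Adj v x) (hvy : G.Adj v y)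
    (hvp : G.Adj v p) (hvq : G.Adj v q) (hvz : G.Adj v z) (hxp : G.Adj x p) (hxq : G.Adj x q)
    (hxz : G.Adj x z) (hqy : G.Adj q y) (hyp : G.Adj y p) (hyz : G.Adj y z) (hpz : G.Adj p z)
    (hxy : x ≠ y) (hpq : p ≠ q) (hzq : z ≠ q) : HasGraphMinor G K₅ := by
  have hyq : y ≠ q := hqy.ne'
  refine (isContractionMap_collapse hxq).hasGraphMinor <|
    hasGraphMinor_K5_of_isClique (v := ⟨v, hvq.ne⟩) (x := ⟨x, hxq.ne⟩)
      (r := {⟨y, hyq⟩, ⟨p, hpq⟩, ⟨z, hzq⟩}) ?_ ?_ (contractEdge_adj_of_adj _ _ hvx) ?_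
      ?_
  · exact (isClique_pair.mpr fun _ => contractEdge_adj_of_adj _ _ hpz).insert <| by
      rintro _ (rfl | rfl) -
      exacts [contractEdge_adj_of_adj _ _ hyp, contractEdge_adj_of_adj _ _ hyz]
  · exact Set.ncard_eq_three.mpr ⟨_, _, _, Subtype.coe_ne_coe.mp hyp.ne,
      Subtype.coe_ne_coe.mp hyz.ne, Subtype.coe_ne_coe.mp hpz.ne, rfl⟩
  · rintro _ (rfl | rfl | rfl)
    exacts [contractEdge_adj_of_adj _ _ hvy, contractEdge_adj_of_adj _ _ hvp,
      contractEdge_adj_of_adj _ _ hvz]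
  · rintro _ (rfl | rfl | rfl)
    exacts [contractEdge_adj_of_adj_right _ _ hxy hqy, contractEdge_adj_of_adj _ _ hxp,
      contractEdge_adj_of_adj _ _ hxz]

lemma adj_of_not_adj {v x y w : V} (hdeg : (G.neighborSet v).ncard ≤ 5)
    (hx : G.Adj v x) (hcommon : 3 ≤ (G.neighborSet v ∩ G.neighborSet x).ncard)
    (hy : G.Adj v y) (hw : G.Adj v w) (hxy : x ≠ y) (hxw : x ≠ w) (hyw : y ≠ w)
    (h : ¬G.Adj x y) : G.Adj x w := by
  by_contra h'
  have hsub : G.neighborSet v ∩ G.neighborSet x ⊆ G.neighborSet v \ {x, y, w} := by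
    rintro u ⟨hu, hxu⟩
    refine ⟨hu, ?_⟩
    rintro (rfl | rfl | rfl)
    exacts [hxu.ne rfl, h hxu, h' hxu]
  have h3 : ({x, y, w} : Set V).ncard = 3 :=
    Set.ncard_eq_three.mpr ⟨x, y, w, hxy, hxw, hyw, rfl⟩
  have := Set.ncard_le_ncard hsub
  rw [Set.ncard_sdiff (by rintro u (rfl | rfl | rfl) <;> assumption), h3] at this
  omega

lemma hasGraphMinor_K5_of_not_adj {v x y : V} (hdeg : (G.neighborSet v).ncard ≤ 5)
    (hcommon : ∀ u ∈ G.neighborSet v, 3 ≤ (G.neighborSet v ∩ G.neighborSet u).ncard)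
    (hx : G.Adj v x) (hy : G.Adj v y) (hxy : x ≠ y) (hnxy : ¬G.Adj x y) :
    HasGraphMinor G K₅ := by
  have hr : (G.neighborSet v \ {x, y}).ncard = (G.neighborSet v).ncard - 2 := by
    have hsub : {x, y} ⊆ G.neighborSet v :=
      Set.insert_subset hx (Set.singleton_subset_iff.mpr hy)
    rw [Set.ncard_sdiff hsub, Set.ncard_pair hxy]
  set r := G.neighborSet v \ {x, y}
  have hxr : ∀ w ∈ r, G.Adj x w := fun w ⟨hw, hwxy⟩ =>
    adj_of_not_adj hdeg hx (hcommon x hx) hy hw hxy (fun e => hwxy (Or.inl e.symm))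
      (fun e => hwxy (Or.inr e.symm)) hnxy
  have hyr : ∀ w ∈ r, G.Adj y w := fun w ⟨hw, hwxy⟩ =>
    adj_of_not_adj hdeg hy (hcommon y hy) hx hw hxy.symm (fun e => hwxy (Or.inr e.symm))
      (fun e => hwxy (Or.inl e.symm)) (fun e => hnxy e.symm)
  have hr3 : r.ncard = 3 := by
    have hsub : G.neighborSet v ∩ G.neighborSet x ⊆ r :=
      fun w ⟨hw, hxw⟩ => ⟨hw, by rintro (rfl | rfl); exacts [hxw.ne rfl, hnxy hxw]⟩
    have := Set.ncard_le_ncard hsub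
    have := hcommon x hx
    omega
  by_cases hrclique : G.IsClique r
  · exact hasGraphMinor_K5_of_isClique hrclique hr3 hx (fun b hb => hb.1) hxr
  obtain ⟨p, hp, q, hq, hpq, hnpq⟩ : ∃ p ∈ r, ∃ q ∈ r, p ≠ q ∧ ¬G.Adj p q := by
    simpa [IsClique, Set.Pairwise] using hrclique
  obtain ⟨z, hz, hzpq⟩ : (r \ {p, q}).Nonempty := by
    refine Set.nonempty_of_ncard_ne_zero ?_
    rw [Set.ncard_sdiff (Set.insert_subset hp (Set.singleton_subset_iff.mpr hq)),
      Set.ncard_pair hpq, hr3]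
    omega
  have hzq : z ≠ q := fun e => hzpq (Or.inr e)
  have hpz : G.Adj p z := adj_of_not_adj hdeg hp.1 (hcommon p hp.1) hq.1 hz.1 hpq
    (fun e => hzpq (Or.inl e.symm)) (Ne.symm hzq) hnpq
  exact hasGraphMinor_K5_of_contractEdge hx hy hp.1 hq.1 hz.1 (hxr p hp) (hxr q hq) (hxr z hz)
    (hyr q hq).symm (hyr p hp) (hyr z hz) hpz hxy hpq hzq

/-- Each neighbour of `v` misses at most one other neighbour, so the neighbourhood contains a
`K₄`, possibly after contracting one edge. -/
theorem hasGraphMinor_K5_of_three_le_ncard_inter {v : V} (hne : (G.neighborSet v).Nonempty)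
    (hdeg : (G.neighborSet v).ncard ≤ 5)
    (hcommon : ∀ u ∈ G.neighborSet v, 3 ≤ (G.neighborSet v ∩ G.neighborSet u).ncard) :
    HasGraphMinor G K₅ := by
  by_cases hclique : G.IsClique (G.neighborSet v)
  · obtain ⟨x, hx⟩ := hne
    obtain ⟨r, hr, hr3⟩ := Set.exists_subset_card_eq (hcommon x hx)
    exact hasGraphMinor_K5_of_isClique (hclique.subset (hr.trans Set.inter_subset_left)) hr3 hx
      (fun b hb => (hr hb).1) (fun b hb => (hr hb).2)
  obtain ⟨x, hx, y, hy, hxy, hnxy⟩ : ∃ x ∈ G.neighborSet v, ∃ y ∈ G.neighborSet v,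
      x ≠ y ∧ ¬G.Adj x y := by
    simpa [IsClique, Set.Pairwise] using hclique
  exact hasGraphMinor_K5_of_not_adj hdeg hcommon hx hy hxy hnxy

end K5

/-- Mader's bound. In a smallest counterexample with exactly `3n - 5` edges every vertex has degree
at least four and every edge lies in three triangles, so a vertex of degree at most five carries a
`K₅`-minor. -/
theorem ncard_edgeSet_add_six_le [Finite V] (hK5 : ¬HasGraphMinor G K₅) (hV : 3 ≤ Nat.card V) :
    G.edgeSet.ncard + 6 ≤ 3 * Nat.card V := by
  induction hn : Nat.card V using Nat.strong_induction_on generalizing V with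
  | _ n ih =>
  by_contra! hE
  rcases Nat.lt_or_ge n 5 with hn5 | hn5
  · have := ncard_edgeSet_le_choose_two G
    rw [hn] at this
    interval_cases n <;> simp [Nat.choose] at this <;> omega
  obtain ⟨G', hG', hE'⟩ := exists_le_ncard_edgeSet_eq (G := G) (k := 3 * n - 5) (by omega)
  have hK5' : ¬HasGraphMinor G' K₅ := fun h => hK5 (h.map (Copy.ofLE _ _ hG'))
  have hdeg : ∀ x, 4 ≤ (G'.neighborSet x).ncard := by
    intro x
    by_contra! hx
    have := ncard_edgeSet_le_induce_compl_add G' x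
    have := natCard_compl_singleton_add_one x
    have := ih (n - 1) (by omega) (G := G'.induce {x}ᶜ)
      (fun h => hK5' (h.map (Copy.induce _ _))) (by omega) (by omega)
    omega
  have hcommon : ∀ u w, G'.Adj u w → 3 ≤ (G'.neighborSet u ∩ G'.neighborSet w).ncard := by
    intro u w huw
    by_contra! h
    have := ncard_edgeSet_le_contractEdge huw
    have := natCard_compl_singleton_add_one w
    have := ih (n - 1) (by omega) (G := contractEdge G' u w)
      (fun h => hK5' ((isContractionMap_collapse huw).hasGraphMinor h)) (by omega) (by omega)
    omega
  obtain ⟨x, hx⟩ : ∃ x, (G'.neighborSet x).ncard ≤ 5 := by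
    by_contra! h
    cases nonempty_fintype V
    have := Finset.card_nsmul_le_sum Finset.univ _ 6 fun x _ => h x
    rw [sum_ncard_neighborSet, Finset.card_univ, ← Nat.card_eq_fintype_card, hn,
      smul_eq_mul] at this
    omega
  exact hK5' (hasGraphMinor_K5_of_three_le_ncard_inter
    (Set.nonempty_of_ncard_ne_zero (by have := hdeg x; omega)) hx fun u hu => hcommon x u hu)

lemma rootedK4Minor_of_adj {a b c d : V} (hab : G.Adj a b) (hac : G.Adj a c) (had : G.Adj a d)
    (hbc : G.Adj b c) (hbd : G.Adj b d) (hcd : G.Adj c d) : RootedK4Minor G a b c d :=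
  ⟨{a}, {b}, {c}, {d}, rfl, rfl, rfl, rfl,
    connected_induce_singleton G a, connected_induce_singleton G b,
    connected_induce_singleton G c, connected_induce_singleton G d,
    Set.disjoint_singleton.mpr hab.ne, Set.disjoint_singleton.mpr hac.ne,
    Set.disjoint_singleton.mpr had.ne, Set.disjoint_singleton.mpr hbc.ne,
    Set.disjoint_singleton.mpr hbd.ne, Set.disjoint_singleton.mpr hcd.ne,
    ⟨a, rfl, b, rfl, hab⟩, ⟨a, rfl, c, rfl, hac⟩, ⟨a, rfl, d, rfl, had⟩,
    ⟨b, rfl, c, rfl, hbc⟩, ⟨b, rfl, d, rfl, hbd⟩, ⟨c, rfl, d, rfl, hcd⟩⟩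

lemma ncard_neighborSet_eq_three_of_mem [Fintype V] {R : Finset V} (hR : R.card = 4)
    (hE : G.edgeSet.ncard + 6 = 3 * Fintype.card V) (hmin : ∀ x, 3 ≤ (G.neighborSet x).ncard)
    (hout : ∀ x ∉ R, 6 ≤ (G.neighborSet x).ncard) {r : V} (hr : r ∈ R) :
    (G.neighborSet r).ncard = 3 := by
  classical
  have hsplit := Finset.sum_sdiff (f := fun x => (G.neighborSet x).ncard) (Finset.subset_univ R)
  rw [sum_ncard_neighborSet] at hsplit
  have hsum_out := Finset.card_nsmul_le_sum (Finset.univ \ R) _ 6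
    fun x hx => hout x (Finset.mem_sdiff.mp hx).2
  rw [Finset.card_sdiff_of_subset (Finset.subset_univ R), Finset.card_univ, hR,
    smul_eq_mul] at hsum_out
  have hsum_in : ∑ x ∈ R, 3 ≤ ∑ x ∈ R, (G.neighborSet x).ncard :=
    Finset.sum_le_sum fun x _ => hmin x
  have h12 : ∑ x ∈ R, 3 = 12 := by simp [hR]
  have hcard := Finset.card_le_univ R
  have heq := (Finset.sum_eq_sum_iff_of_le (s := R) (f := fun _ => 3) fun x _ => hmin x).mp
    (by omega)
  exact (heq r hr).symm

/-- Counting degrees forces every root to have degree three, and a root has no neighbour outside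
`R` since such an edge would lie in three triangles. -/
lemma adj_of_three_le_ncard_inter [Finite V] (hK5 : ¬HasGraphMinor G K₅)
    (hE : 3 * Nat.card V ≤ G.edgeSet.ncard + 6) {R : Finset V} (hR : R.card = 4)
    (hdense : ∀ u w, G.Adj u w → w ∉ R → 3 ≤ (G.neighborSet u ∩ G.neighborSet w).ncard)
    {r r' : V} (hr : r ∈ R) (hr' : r' ∈ R) (hrr' : r ≠ r') : G.Adj r r' := by
  classical
  cases nonempty_fintype V
  have hn : 4 ≤ Nat.card V := by
    rw [Nat.card_eq_fintype_card, ← hR]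
    exact Finset.card_le_univ R
  have hE' : G.edgeSet.ncard + 6 = 3 * Nat.card V :=
    le_antisymm (ncard_edgeSet_add_six_le hK5 (by omega)) hE
  have hmin : ∀ x, 3 ≤ (G.neighborSet x).ncard := by
    intro x
    by_contra! hx
    have := ncard_edgeSet_le_induce_compl_add G x
    have := natCard_compl_singleton_add_one x
    have := ncard_edgeSet_add_six_le (G := G.induce {x}ᶜ)
      (fun h => hK5 (h.map (Copy.induce _ _))) (by omega)
    omega
  have hout : ∀ x ∉ R, 6 ≤ (G.neighborSet x).ncard := by
    intro x hx
    by_contra! h6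
    refine hK5 (hasGraphMinor_K5_of_three_le_ncard_inter (v := x)
      (Set.nonempty_of_ncard_ne_zero (by have := hmin x; omega)) (by omega) fun u hu => ?_)
    rw [Set.inter_comm]
    exact hdense u x hu.symm hx
  have hdeg := ncard_neighborSet_eq_three_of_mem hR (by rwa [← Nat.card_eq_fintype_card]) hmin
    hout hr
  have hsub : G.neighborSet r ⊆ ↑(R.erase r) := by
    intro u hu
    refine Finset.mem_erase.mpr ⟨hu.ne', ?_⟩
    by_contra huR
    have := ncard_inter_neighborSet_lt hu
    have := hdense r u hu huR
    omega
  have hN := Set.eq_of_subset_of_ncard_le hsub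
    (by rw [Set.ncard_coe_finset, Finset.card_erase_of_mem hr, hR, hdeg])
  show r' ∈ G.neighborSet r
  rw [hN]
  exact Finset.mem_erase.mpr ⟨hrr'.symm, hr'⟩

theorem rootedK4Minor_of_not_hasGraphMinor [Finite V] (hK5 : ¬HasGraphMinor G K₅)
    (hE : 3 * Nat.card V ≤ G.edgeSet.ncard + 6) {a b c d : V} (hab : a ≠ b) (hac : a ≠ c)
    (had : a ≠ d) (hbc : b ≠ c) (hbd : b ≠ d) (hcd : c ≠ d) : RootedK4Minor G a b c d := by
  classical
  induction hn : Nat.card V using Nat.strong_induction_on generalizing V with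
  | _ n ih =>
  by_cases hcontr : ∃ u w, G.Adj u w ∧ w ∉ ({a, b, c, d} : Finset V) ∧
      (G.neighborSet u ∩ G.neighborSet w).ncard ≤ 2
  · obtain ⟨u, w, huw, hw, h2⟩ := hcontr
    simp only [Finset.mem_insert, Finset.mem_singleton, not_or] at hw
    obtain ⟨haw, hbw, hcw, hdw⟩ := hw
    have hf := isContractionMap_collapse huw
    have := ncard_edgeSet_le_contractEdge huw
    have := natCard_compl_singleton_add_one w
    apply hf.rootedK4Minor
    rw [collapse_of_ne _ (Ne.symm haw), collapse_of_ne _ (Ne.symm hbw),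
      collapse_of_ne _ (Ne.symm hcw), collapse_of_ne _ (Ne.symm hdw)]
    exact ih (n - 1) (by omega) (G := contractEdge G u w) (fun h => hK5 (hf.hasGraphMinor h))
      (by omega) (Subtype.coe_ne_coe.mp hab) (Subtype.coe_ne_coe.mp hac)
      (Subtype.coe_ne_coe.mp had) (Subtype.coe_ne_coe.mp hbc) (Subtype.coe_ne_coe.mp hbd)
      (Subtype.coe_ne_coe.mp hcd) (by omega)
  push Not at hcontr
  have hR : ({a, b, c, d} : Finset V).card = 4 := by
    simp [Finset.card_insert_of_notMem, hab, hac, had, hbc, hbd, hcd]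
  have hadj := fun {r r'} => adj_of_three_le_ncard_inter hK5 hE hR hcontr (r := r) (r' := r')
  exact rootedK4Minor_of_adj (hadj (by simp) (by simp) hab) (hadj (by simp) (by simp) hac)
    (hadj (by simp) (by simp) had) (hadj (by simp) (by simp) hbc) (hadj (by simp) (by simp) hbd)
    (hadj (by simp) (by simp) hcd)

end SimpleGraph

theorem planar_triangulation_rooted_K4_minor_general [Fintype V] (G : SimpleGraph V)
    (hplanar : IsPlanar G)
    (htri : G.edgeSet.ncard + 6 = 3 * Nat.card V) (a b c d : V)
    (hab : a ≠ b) (hac : a ≠ c) (had : a ≠ d) (hbc : b ≠ c) (hbd : b ≠ d) (hcd : c ≠ d) :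
    RootedK4Minor G a b c d :=
  SimpleGraph.rootedK4Minor_of_not_hasGraphMinor hplanar.1 htri.ge hab hac had hbc hbd hcd

/-- a planar triangulation (edge-maximal planar graph, every face a
triangle) has a `K₄`-minor rooted at every four distinct vertices. -/
theorem planar_triangulation_rooted_K4_minor [Fintype V] (G : SimpleGraph V)
    (hplanar : IsPlanar G) (hcard : 3 ≤ Nat.card V)
    (htri : G.edgeSet.ncard + 6 = 3 * Nat.card V) (a b c d : V)
    (hab : a ≠ b) (hac : a ≠ c) (had : a ≠ d) (hbc : b ≠ c) (hbd : b ≠ d) (hcd : c ≠ d) :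
    RootedK4Minor G a b c d :=
  planar_triangulation_rooted_K4_minor_general G hplanar htri a b c d hab hac had hbc hbd hcd
end

section
/- Let H be a graph with distinct vertices a, b, c, d, and let H^+ be any graph obtained from H by attaching, to each triangle T of H, a (possibly empty) clique X_T whose vertices are adjacent to all three vertices of T. Then H^+ contains a K_4-minor rooted at a, b, c, d if and only if H does. -/
/-!
A vertex `x ∉ S` is adjacent exactly to its triangle `t x ⊆ S` and to the other vertices of its
clique. So in a connected branch set `A` meeting `S`, every `x ∈ A \ S` has a vertex of `t x`
in `A` (a path from `x` to `S` inside `A` leaves the clique of `x` through `t x`). Sending each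
vertex of `A` to itself if it lies in `S`, and otherwise to such a vertex of its triangle, maps
every edge to an edge or a loop, because two adjacent vertices land in a common clique. Hence
`A ∩ S` is still connected, and an edge between disjoint branch sets `A`, `B` yields one between
`A ∩ S` and `B ∩ S`. The converse direction holds because `G[S]` is a subgraph of `G`.
-/

open SimpleGraph

variable {V : Type*}

def IsAnchor (S : Set V) (t : V → Finset V) (x y : V) : Prop :=
  x ∈ S ∧ y = x ∨ x ∉ S ∧ y ∈ t x

lemma IsAnchor.mem {S : Set V} {t : V → Finset V} (hS : ∀ x ∉ S, ↑(t x) ⊆ S) {x y : V}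
    (h : IsAnchor S t x y) : y ∈ S := by
  rcases h with ⟨hx, rfl⟩ | ⟨hx, hy⟩
  exacts [hx, hS x hx hy]

lemma SimpleGraph.Reachable.map_of_eq_or_adj_s8 {W : Type*} {G : SimpleGraph V} {G' : SimpleGraph W}
    (f : V → W) (hf : ∀ ⦃u v⦄, G.Adj u v → f u = f v ∨ G'.Adj (f u) (f v)) {u v : V}
    (h : G.Reachable u v) : G'.Reachable (f u) (f v) := by
  rw [reachable_iff_reflTransGen] at h ⊢
  refine Relation.ReflTransGen.lift' f (fun x y hxy => ?_) _ _ h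
  change Relation.ReflTransGen G'.Adj (f x) (f y)
  rcases hf hxy with hxy | hxy
  exacts [hxy ▸ .refl, .single hxy]

noncomputable def SimpleGraph.induceInduceIso (G : SimpleGraph V) (s : Set V) (A : Set s) :
    (G.induce s).induce A ≃g G.induce (Subtype.val '' A) :=
  { Equiv.Set.image _ A Subtype.val_injective with map_rel_iff' := Iff.rfl }

lemma rootedK4MinorOn_induce_iff (G : SimpleGraph V) {s : Set V} {a b c d : s}
    {A B C D : Set s} :
    RootedK4MinorOn (G.induce s) a b c d A B C D ↔
      RootedK4MinorOn G a b c d (Subtype.val '' A) (Subtype.val '' B)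
        (Subtype.val '' C) (Subtype.val '' D) := by
  simp only [RootedK4MinorOn, Subtype.val_injective.mem_set_image,
    (induceInduceIso G s _).connected_iff, Set.disjoint_image_iff Subtype.val_injective,
    Set.exists_mem_image, induce_adj]

namespace CliqueExpansion

variable {G : SimpleGraph V} {S : Set V} {t : V → Finset V}

lemma triangle_subset (h : CliqueExpansion G S t) : ∀ x ∉ S, ↑(t x) ⊆ S :=
  fun x hx => (h x hx).1

lemma adj_iff (h : CliqueExpansion G S t) {x : V} (hx : x ∉ S) {y : V} :
    G.Adj x y ↔ y ∈ t x ∨ (y ∉ S ∧ y ≠ x ∧ t y = t x) :=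
  (h x hx).2.2.2 y

lemma adj_triangle (h : CliqueExpansion G S t) {x : V} (hx : x ∉ S) {y z : V}
    (hy : y ∈ t x) (hz : z ∈ t x) (hyz : y ≠ z) : G.Adj y z :=
  (h x hx).2.2.1 y hy z hz hyz

lemma eq_or_adj_of_isAnchor (h : CliqueExpansion G S t) {x y x' y' : V} (hxy : G.Adj x y)
    (hx : IsAnchor S t x x') (hy : IsAnchor S t y y') : x' = y' ∨ G.Adj x' y' := by
  rw [or_iff_not_imp_left]
  intro hne
  rcases hx with ⟨hxS, rfl⟩ | ⟨hxS, hx'⟩ <;> rcases hy with ⟨hyS, rfl⟩ | ⟨hyS, hy'⟩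
  · exact hxy
  · have hxt : x' ∈ t y := ((h.adj_iff hyS).1 hxy.symm).resolve_right fun h => h.1 hxS
    exact h.adj_triangle hyS hxt hy' hne
  · have hyt : y' ∈ t x := ((h.adj_iff hxS).1 hxy).resolve_right fun h => h.1 hyS
    exact h.adj_triangle hxS hx' hyt hne
  · have hty : t y = t x := by
      rcases (h.adj_iff hxS).1 hxy with hyt | ⟨-, -, hty⟩
      · exact absurd (h.triangle_subset x hxS hyt) hyS
      · exact hty
    exact h.adj_triangle hxS hx' (hty ▸ hy') hne

lemma exists_isAnchor_mem (h : CliqueExpansion G S t) {A : Set V}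
    (hA : (G.induce A).Connected) (hAS : (A ∩ S).Nonempty) {x : V} (hx : x ∈ A) :
    ∃ x' ∈ A, IsAnchor S t x x' := by
  by_cases hxS : x ∈ S
  · exact ⟨x, hx, Or.inl ⟨hxS, rfl⟩⟩
  obtain ⟨r, hrA, hrS⟩ := hAS
  obtain ⟨w⟩ := hA.preconnected ⟨x, hx⟩ ⟨r, hrA⟩
  obtain ⟨d, -, ⟨hd₁S, hd₁t⟩, hd₂⟩ :=
    w.exists_boundary_dart {y | (y : V) ∉ S ∧ t y = t x} ⟨hxS, rfl⟩ fun h => h.1 hrS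
  rcases (h.adj_iff hd₁S).1 d.adj with hd | ⟨hd₂S, -, hd₂t⟩
  · exact ⟨d.snd, d.snd.2, Or.inr ⟨hxS, hd₁t ▸ hd⟩⟩
  · exact absurd ⟨hd₂S, hd₂t.trans hd₁t⟩ hd₂

lemma induce_inter_connected (h : CliqueExpansion G S t) {A : Set V}
    (hA : (G.induce A).Connected) (hAS : (A ∩ S).Nonempty) :
    (G.induce (A ∩ S)).Connected := by
  choose f hfA hf using fun x : A => h.exists_isAnchor_mem hA hAS x.2
  let g : A → ↥(A ∩ S) := fun x => ⟨f x, hfA x, (hf x).mem h.triangle_subset⟩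
  have hg : ∀ x : ↥(A ∩ S), g ⟨x, x.2.1⟩ = x := fun x =>
    Subtype.ext <| by
      rcases hf ⟨x, x.2.1⟩ with ⟨-, hx⟩ | ⟨hx, -⟩
      exacts [hx, absurd x.2.2 hx]
  have := hAS.coe_sort
  refine ⟨fun u v => ?_⟩
  rw [← hg u, ← hg v]
  exact (hA.preconnected _ _).map_of_eq_or_adj_s8 g
    fun x y hxy => (h.eq_or_adj_of_isAnchor hxy (hf x) (hf y)).imp_left Subtype.ext

lemma exists_adj_inter (h : CliqueExpansion G S t) {A B : Set V}
    (hA : (G.induce A).Connected) (hB : (G.induce B).Connected)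
    (hAS : (A ∩ S).Nonempty) (hBS : (B ∩ S).Nonempty) (hAB : Disjoint A B)
    (hadj : ∃ x ∈ A, ∃ y ∈ B, G.Adj x y) :
    ∃ x ∈ A ∩ S, ∃ y ∈ B ∩ S, G.Adj x y := by
  obtain ⟨x, hx, y, hy, hxy⟩ := hadj
  obtain ⟨x', hx'A, hx'⟩ := h.exists_isAnchor_mem hA hAS hx
  obtain ⟨y', hy'B, hy'⟩ := h.exists_isAnchor_mem hB hBS hy
  refine ⟨x', ⟨hx'A, hx'.mem h.triangle_subset⟩, y', ⟨hy'B, hy'.mem h.triangle_subset⟩, ?_⟩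
  exact (h.eq_or_adj_of_isAnchor hxy hx' hy').resolve_left (hAB.ne_of_mem hx'A hy'B)

end CliqueExpansion

lemma RootedK4MinorOn.inter_of_cliqueExpansion {G : SimpleGraph V} {S : Set V}
    {t : V → Finset V} (hexp : CliqueExpansion G S t) {a b c d : V} {A B C D : Set V}
    (ha : a ∈ S) (hb : b ∈ S) (hc : c ∈ S) (hd : d ∈ S)
    (h : RootedK4MinorOn G a b c d A B C D) :
    RootedK4MinorOn G a b c d (A ∩ S) (B ∩ S) (C ∩ S) (D ∩ S) := by
  obtain ⟨haA, hbB, hcC, hdD, cA, cB, cC, cD,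
    dAB, dAC, dAD, dBC, dBD, dCD, eAB, eAC, eAD, eBC, eBD, eCD⟩ := h
  have nA : (A ∩ S).Nonempty := ⟨a, haA, ha⟩
  have nB : (B ∩ S).Nonempty := ⟨b, hbB, hb⟩
  have nC : (C ∩ S).Nonempty := ⟨c, hcC, hc⟩
  have nD : (D ∩ S).Nonempty := ⟨d, hdD, hd⟩
  have dInter {X Y : Set V} (hXY : Disjoint X Y) : Disjoint (X ∩ S) (Y ∩ S) :=
    hXY.mono Set.inter_subset_left Set.inter_subset_left
  exact ⟨⟨haA, ha⟩, ⟨hbB, hb⟩, ⟨hcC, hc⟩, ⟨hdD, hd⟩,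
    hexp.induce_inter_connected cA nA, hexp.induce_inter_connected cB nB,
    hexp.induce_inter_connected cC nC, hexp.induce_inter_connected cD nD,
    dInter dAB, dInter dAC, dInter dAD, dInter dBC, dInter dBD, dInter dCD,
    hexp.exists_adj_inter cA cB nA nB dAB eAB, hexp.exists_adj_inter cA cC nA nC dAC eAC,
    hexp.exists_adj_inter cA cD nA nD dAD eAD, hexp.exists_adj_inter cB cC nB nC dBC eBC,
    hexp.exists_adj_inter cB cD nB nD dBD eBD, hexp.exists_adj_inter cC cD nC nD dCD eCD⟩

theorem cliqueExpansion_rooted_K4_minor_iff_general (G : SimpleGraph V) (S : Set V)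
    (t : V → Finset V) (hexp : CliqueExpansion G S t) (a b c d : V)
    (ha : a ∈ S) (hb : b ∈ S) (hc : c ∈ S) (hd : d ∈ S) :
    RootedK4Minor G a b c d ↔
      RootedK4Minor (G.induce S) ⟨a, ha⟩ ⟨b, hb⟩ ⟨c, hc⟩ ⟨d, hd⟩ := by
  constructor
  · rintro ⟨A, B, C, D, h⟩
    refine ⟨Subtype.val ⁻¹' A, Subtype.val ⁻¹' B, Subtype.val ⁻¹' C, Subtype.val ⁻¹' D, ?_⟩
    rw [rootedK4MinorOn_induce_iff]
    simp only [Subtype.image_preimage_coe, Set.inter_comm S]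
    exact h.inter_of_cliqueExpansion hexp ha hb hc hd
  · rintro ⟨A, B, C, D, h⟩
    exact ⟨_, _, _, _, (rootedK4MinorOn_induce_iff G).1 h⟩

/-- attaching cliques to triangles of `H` does not change whether
there is a `K₄`-minor rooted at `a,b,c,d ∈ V(H)`. -/
theorem cliqueExpansion_rooted_K4_minor_iff (G : SimpleGraph V) (S : Set V)
    (t : V → Finset V) (hexp : CliqueExpansion G S t) (a b c d : V)
    (ha : a ∈ S) (hb : b ∈ S) (hc : c ∈ S) (hd : d ∈ S)
    (hab : a ≠ b) (hac : a ≠ c) (had : a ≠ d) (hbc : b ≠ c) (hbd : b ≠ d) (hcd : c ≠ d) :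
    RootedK4Minor G a b c d ↔
      RootedK4Minor (G.induce S) ⟨a, ha⟩ ⟨b, hb⟩ ⟨c, hc⟩ ⟨d, hd⟩ :=
  cliqueExpansion_rooted_K4_minor_iff_general G S t hexp a b c d ha hb hc hd
end

section
/- Let G be a 2-connected graph with nominated vertices a, b, c, d, and let (G_1, G_2) be a separation of G of order 2 with a, b ∈ V(G_1), c, d ∈ V(G_2), and V(G_1) ∩ V(G_2) = {u, v}. Let G_i' be G_i with the edge uv added. Then G contains a K_4-minor rooted at a, b, c, d if and only if G_1' contains a K_4-minor rooted at a, b, u, v or G_2' contains one rooted at u, v, c, d. -/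
open SimpleGraph

variable {V : Type*}

/-!
(⇒) A branch set through `a` or `b` that touches one through `c` or `d` must, together with it,
pass through `u` or `v`. Since only two branch sets can contain `u` or `v`, either those of `c`
and `d` contain one each, or those of `a` and `b` do. In the first case, intersecting all branch
sets with `A` gives a minor of `G_1'` rooted at `a, b, u, v`, in which the edge `uv` replaces the
connection through `B`; the second case is symmetric.

(⇐) Whitney's theorem (a 2-connected graph has two internally disjoint paths between any two
vertices), applied to `G` with an apex joined to `c` and `d`, gives two disjoint paths in `G_2`
from `{u, v}` to `{c, d}`. These grow into a partition of `B` into two connected sets, one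
containing `u` and the other `v`, which are joined by an edge. Adding them to the branch sets of
`u` and `v` turns a minor of `G_1'` rooted at `a, b, u, v` into one of `G` rooted at `a, b, c, d`,
the edge between the two sets replacing `uv`.
-/
namespace SimpleGraph

variable {W : Type*} {G : SimpleGraph V}

lemma connected_induce_range {H : SimpleGraph W} (f : G →g H) (hG : G.Connected) :
    (H.induce (Set.range f)).Connected :=
  hG.map ⟨Set.rangeFactorization f, fun h => f.map_adj h⟩ Set.rangeFactorization_surjective

lemma exists_walk_of_connected_induce {X : Set V} (hX : (G.induce X).Connected) {x y : V}
    (hx : x ∈ X) (hy : y ∈ X) : ∃ w : G.Walk x y, ∀ z ∈ w.support, z ∈ X := by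
  obtain ⟨w⟩ := hX.preconnected ⟨x, hx⟩ ⟨y, hy⟩
  refine ⟨w.map (Embedding.induce X).toHom, fun z hz => ?_⟩
  obtain ⟨z', -, rfl⟩ := List.mem_map.mp (Walk.support_map _ w ▸ hz)
  exact z'.2

lemma connected_induce_of_forall_walk {X : Set V} {u : V} (hu : u ∈ X)
    (h : ∀ x ∈ X, ∃ w : G.Walk u x, ∀ z ∈ w.support, z ∈ X) : (G.induce X).Connected :=
  G.induce_connected_of_patches u hu fun hx =>
    let ⟨w, hw⟩ := h _ hx
    ⟨_, hw, w.start_mem_support, w.end_mem_support, w.connected_induce_support.preconnected _ _⟩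

lemma Walk.exists_prefix_first_mem {X : Set V} {x y : V} (w : G.Walk x y) (hy : y ∈ X) :
    ∃ z ∈ X, ∃ w' : G.Walk x z,
      (∀ a ∈ w'.support, a ∈ w.support) ∧ ∀ a ∈ w'.support, a ∈ X → a = z := by
  classical
  obtain ⟨z, hz, hzw, hfirst⟩ :=
    w.exists_mem_support_forall_mem_support_imp_eq {a ∈ w.support.toFinset | a ∈ X}
      ⟨y, by simp [hy]⟩
  have hsub := w.support_takeUntil_subset_support hzw
  exact ⟨z, (Finset.mem_filter.mp hz).2, w.takeUntil z hzw, fun a ha => hsub ha,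
    fun a ha haX => hfirst a (by simp [haX, hsub ha]) ha⟩

lemma exists_connected_partition {T : Set V} (hT : (G.induce T).Connected) {P₀ Q₀ : Set V}
    (hP₀T : P₀ ⊆ T) (hQ₀T : Q₀ ⊆ T) (hPQ : Disjoint P₀ Q₀) (hP₀ : (G.induce P₀).Connected)
    (hQ₀ : (G.induce Q₀).Connected) :
    ∃ Q, Q₀ ⊆ Q ∧ Q ⊆ T ∧ P₀ ⊆ T \ Q ∧ (G.induce Q).Connected ∧
      (G.induce (T \ Q)).Connected := by
  classical
  obtain ⟨⟨q₀, hq₀⟩⟩ := hQ₀.nonempty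
  obtain ⟨⟨p₀, hp₀⟩⟩ := hP₀.nonempty
  -- `Q` is the component of `G[T \ P₀]` containing `q₀`.
  let Q := {x | ∃ w : G.Walk q₀ x, ∀ c ∈ w.support, c ∈ T \ P₀}
  have hQ : ∀ x ∈ Q, x ∈ T \ P₀ := fun x ⟨w, hw⟩ => hw x w.end_mem_support
  have hP₀Q : P₀ ⊆ T \ Q := fun x hx => ⟨hP₀T hx, fun hxQ => (hQ x hxQ).2 hx⟩
  refine ⟨Q, fun x hx => ?_, fun x hx => (hQ x hx).1, hP₀Q, ?_, ?_⟩
  · obtain ⟨w, hw⟩ := exists_walk_of_connected_induce hQ₀ hq₀ hx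
    exact ⟨w, fun c hc => ⟨hQ₀T (hw c hc), Set.disjoint_right.mp hPQ (hw c hc)⟩⟩
  · have hq₀Q : q₀ ∈ Q := ⟨.nil, by simpa using ⟨hQ₀T hq₀, Set.disjoint_right.mp hPQ hq₀⟩⟩
    refine connected_induce_of_forall_walk hq₀Q fun x ⟨w, hw⟩ => ⟨w, fun c hc => ?_⟩
    exact ⟨w.takeUntil c hc, fun a ha => hw a (w.support_takeUntil_subset_support hc ha)⟩
  · refine connected_induce_of_forall_walk (hP₀Q hp₀) fun x hx => ?_
    obtain ⟨w, hw⟩ := exists_walk_of_connected_induce hT hx.1 (hP₀T hp₀)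
    obtain ⟨z, hz, w', hw'w, hfirst⟩ := w.exists_prefix_first_mem (X := P₀ ∪ Q) (.inl hp₀)
    have hzP₀ : z ∈ P₀ := by
      refine hz.resolve_right fun hzQ => hx.2 ?_
      obtain ⟨u, hu⟩ := id hzQ
      refine ⟨u.append w'.reverse, fun c hc => ?_⟩
      rw [Walk.mem_support_append_iff, Walk.support_reverse, List.mem_reverse] at hc
      refine hc.elim (hu c) fun hc => ⟨hw c (hw'w c hc), fun hcP => ?_⟩
      obtain rfl := hfirst c hc (.inl hcP)
      exact (hQ c hzQ).2 hcP
    obtain ⟨v, hv⟩ := exists_walk_of_connected_induce hP₀ hzP₀ hp₀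
    refine ⟨(w'.append v).reverse, fun c hc => ?_⟩
    rw [Walk.support_reverse, List.mem_reverse, Walk.mem_support_append_iff] at hc
    refine hc.elim (fun hc => ⟨hw c (hw'w c hc), fun hcQ => ?_⟩) (fun hc => hP₀Q (hv c hc))
    obtain rfl := hfirst c hc (.inr hcQ)
    exact (hQ c hcQ).2 hzP₀

lemma exists_adj_diff_of_connected_induce {T Q : Set V} (hT : (G.induce T).Connected) {x y : V}
    (hx : x ∈ T \ Q) (hy : y ∈ T) (hyQ : y ∈ Q) : ∃ a ∈ T \ Q, ∃ b ∈ Q, G.Adj a b := by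
  obtain ⟨w, hw⟩ := exists_walk_of_connected_induce hT hx.1 hy
  obtain ⟨d, hd, h₁, h₂⟩ := w.exists_boundary_dart (T \ Q) hx fun h => h.2 hyQ
  refine ⟨_, h₁, _, by_contra fun h => h₂ ⟨hw _ (w.dart_snd_mem_support_of_mem_darts hd), h⟩,
    d.adj⟩

section Whitney

variable {H : SimpleGraph W} {x y : W}

def Walk.InternallyDisjoint (p q : H.Walk x y) : Prop :=
  ∀ z ∈ p.support, z ∈ q.support → z = x ∨ z = y

lemma Walk.InternallyDisjoint.symm {p q : H.Walk x y} (h : p.InternallyDisjoint q) :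
    q.InternallyDisjoint p :=
  fun z hq hp => h z hp hq

lemma Walk.InternallyDisjoint.mono {p q p' q' : H.Walk x y} (h : p.InternallyDisjoint q)
    (hp : p'.support ⊆ p.support) (hq : q'.support ⊆ q.support) : p'.InternallyDisjoint q' :=
  fun z hp' hq' => h z (hp hp') (hq hq')

lemma Walk.internallyDisjoint_append_concat [DecidableEq W] {y' z : W} {P₁ P₂ : H.Walk x y'}
    (hP₁ : P₁.IsPath) (hP : P₁.InternallyDisjoint P₂) (hy : H.Adj y' y) {R : H.Walk y z}
    (hR : y' ∉ R.support) (hz : z ∈ P₁.support) (hfirst : ∀ a ∈ R.support, a ∈ P₂.support → a = z) :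
    ((P₁.takeUntil z hz).append R.reverse).InternallyDisjoint (P₂.concat hy) := by
  have hzy' : y' ≠ z := fun h => hR (h ▸ R.end_mem_support)
  intro a ha hb
  rw [Walk.support_concat, List.mem_append, List.mem_singleton] at hb
  rcases hb with hb | rfl
  · rw [Walk.mem_support_append_iff, Walk.support_reverse, List.mem_reverse] at ha
    rcases ha with ha | ha
    · refine (hP a (P₁.support_takeUntil_subset_support hz ha) hb).imp_right fun h => ?_
      exact (Walk.endpoint_notMem_support_takeUntil hP₁ hz hzy' (h ▸ ha)).elim
    · obtain rfl := hfirst a ha hb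
      exact .inl ((hP a hz hb).resolve_right hzy'.symm)
  · exact .inr rfl

theorem exists_internallyDisjoint_paths [DecidableEq W] (hH : H.Connected)
    (hH₂ : ∀ w, (H.induce {w}ᶜ).Connected) (hxy : x ≠ y) :
    ∃ p q : H.Walk x y, p.IsPath ∧ q.IsPath ∧ p.InternallyDisjoint q := by
  obtain ⟨w⟩ := hH.preconnected y x
  induction w with
  | nil => exact (hxy rfl).elim
  | @cons y y' x h w ih =>
    by_cases hxy' : x = y'
    · subst hxy'
      refine ⟨.cons h.symm .nil, .cons h.symm .nil, ?_, ?_, fun z hz _ => by simpa using hz⟩ <;>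
        simpa using hxy
    obtain ⟨P₁, P₂, hP₁, hP₂, hP⟩ := ih hxy'
    -- Reroute one of the two paths to `y'` through a walk from `y` avoiding `y'`.
    obtain ⟨R, hR⟩ := exists_walk_of_connected_induce (hH₂ y') (x := y) (y := x)
      (by simpa using h.ne) (by simpa using hxy')
    obtain ⟨z, hz, R', hR'R, hfirst⟩ :=
      R.exists_prefix_first_mem (X := {a | a ∈ P₁.support ∨ a ∈ P₂.support})
        (.inl P₁.start_mem_support)
    have hR' : y' ∉ R'.support := fun h' => by simpa using hR _ (hR'R _ h')
    obtain ⟨p, q, hpq⟩ : ∃ p q : H.Walk x y, p.InternallyDisjoint q := by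
      rcases hz with hz | hz
      · exact ⟨_, _, Walk.internallyDisjoint_append_concat hP₁ hP h.symm hR' hz
          fun a ha ha₂ => hfirst a ha (.inr ha₂)⟩
      · exact ⟨_, _, Walk.internallyDisjoint_append_concat hP₂ hP.symm h.symm hR' hz
          fun a ha ha₁ => hfirst a ha (.inl ha₁)⟩
    exact ⟨p.toPath, q.toPath, p.toPath.2, q.toPath.2,
      hpq.mono p.support_toPath_subset_support q.support_toPath_subset_support⟩

end Whitney

end SimpleGraph

namespace Apex

variable {G : SimpleGraph V} {s : Set V}

@[simp] lemma adj_some_some {x y : V} : (Apex G s).Adj (some x) (some y) ↔ G.Adj x y := by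
  simp [Apex]

@[simp] lemma adj_none_some {x : V} : (Apex G s).Adj none (some x) ↔ x ∈ s := by
  simp [Apex]

def someHom : G →g Apex G s := ⟨some, adj_some_some.mpr⟩

lemma connected (hG : G.Connected) (hs : s.Nonempty) : (Apex G s).Connected := by
  obtain ⟨z, hz⟩ := hs
  refine (connected_iff_exists_forall_reachable _).mpr ⟨none, ?_⟩
  rintro (_ | x)
  · rfl
  · exact (adj_none_some.mpr hz).reachable.trans ((hG.preconnected z x).map someHom)

lemma connected_induce_compl_singleton (hG : G.Connected)
    (hG₂ : ∀ w, (G.induce {w}ᶜ).Connected) (hs : ∀ w, ∃ z ∈ s, z ≠ w) (ω : Option V) :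
    ((Apex G s).induce {ω}ᶜ).Connected := by
  cases ω with
  | none =>
    have hrange : Set.range (someHom (G := G) (s := s)) = {none}ᶜ := by
      ext (_ | x) <;> simp [someHom]
    exact hrange ▸ connected_induce_range someHom hG
  | some w =>
    obtain ⟨z, hz, hzw⟩ := hs w
    let f : G.induce {w}ᶜ →g Apex G s := someHom.comp (Embedding.induce _).toHom
    have hset : ({some w}ᶜ : Set (Option V)) = Set.range f ∪ {some z, none} := by
      ext (_ | x) <;> simp [f, someHom]
      rintro rfl
      exact hzw
    rw [hset]
    exact induce_union_connected (connected_induce_range f (hG₂ w)).preconnected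
      (induce_pair_connected_of_adj (adj_none_some.mpr hz).symm).preconnected
      ⟨some z, ⟨⟨z, hzw⟩, rfl⟩, by simp⟩

lemma exists_walk_of_none_notMem {α β : Option V} (p : (Apex G s).Walk α β)
    (hp : none ∉ p.support) {a b : V} (ha : α = some a) (hb : β = some b) :
    ∃ w : G.Walk a b, ∀ c ∈ w.support, some c ∈ p.support := by
  induction p generalizing a with
  | nil =>
    obtain rfl := Option.some_injective _ (ha.symm.trans hb)
    exact ⟨.nil, by simp [ha]⟩
  | @cons α γ β h p ih =>
    subst ha
    obtain ⟨m, rfl⟩ : ∃ m, γ = some m :=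
      Option.ne_none_iff_exists'.mp fun h' => hp (by subst h'; simp)
    obtain ⟨w, hw⟩ := ih (fun h' => hp (by simp [h'])) rfl hb
    refine ⟨.cons (adj_some_some.mp h) w, fun c hc => ?_⟩
    rw [Walk.support_cons, List.mem_cons] at hc
    rcases hc with rfl | hc
    · simp
    · simp [hw c hc]

end Apex

lemma KConnected.connected {G : SimpleGraph V} {k : ℕ} (h : KConnected k G) (hk : 0 < k) :
    G.Connected := by
  have := h.2 ∅ Set.finite_empty (by simpa using hk)
  rw [Set.compl_empty] at this
  exact (induceUnivIso G).connected_iff.mp this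

lemma KConnected.connected_induce_compl_singleton {G : SimpleGraph V} {k : ℕ}
    (h : KConnected k G) (hk : 1 < k) (w : V) : (G.induce {w}ᶜ).Connected :=
  h.2 {w} (Set.finite_singleton w) (by simpa using hk)

namespace SimpleGraph

variable {G : SimpleGraph V}

section Separation

variable {S T : Set V}

lemma Walk.exists_mem_support_mem_inter
    (hsep : ∀ ⦃x y⦄, G.Adj x y → x ∈ S ∧ y ∈ S ∨ x ∈ T ∧ y ∈ T) {x y : V} (w : G.Walk x y)
    (hx : x ∉ T) (hy : y ∈ T) : ∃ z ∈ w.support, z ∈ S ∩ T := by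
  obtain ⟨d, hd, hfst, hsnd⟩ := w.exists_boundary_dart Tᶜ hx (by simpa using hy)
  refine ⟨d.toProd.2, w.dart_snd_mem_support_of_mem_darts hd, ?_, not_not.mp hsnd⟩
  exact ((hsep d.adj).resolve_right fun h => hfst h.1).2

lemma Walk.exists_prefix_in_side
    (hsep : ∀ ⦃x y⦄, G.Adj x y → x ∈ S ∧ y ∈ S ∨ x ∈ T ∧ y ∈ T) :
    ∀ {x y : V} (w : G.Walk x y), x ∈ S →
      ∃ z, (z = y ∨ z ∈ S ∩ T) ∧ ∃ w' : G.Walk x z, ∀ a ∈ w'.support, a ∈ S ∧ a ∈ w.support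
  | _, _, .nil, hx => ⟨_, .inl rfl, .nil, by simpa using hx⟩
  | x, _, .cons (v := m) h w, hx => by
    by_cases hm : m ∈ S
    · obtain ⟨z, hz, w', hw'⟩ := exists_prefix_in_side hsep w hm
      refine ⟨z, hz, .cons h w', ?_⟩
      simp only [Walk.support_cons, List.mem_cons, forall_eq_or_imp, true_or, and_true]
      exact ⟨hx, fun a ha => ⟨(hw' a ha).1, .inr (hw' a ha).2⟩⟩
    · have hxT : x ∈ T := ((hsep h).resolve_left fun h' => hm h'.2).1
      exact ⟨x, .inr ⟨hx, hxT⟩, .nil, by simpa using hx⟩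

lemma subset_diff_of_connected_induce (huniv : S ∪ T = Set.univ)
    (hsep : ∀ ⦃x y⦄, G.Adj x y → x ∈ S ∧ y ∈ S ∨ x ∈ T ∧ y ∈ T) {X : Set V}
    (hX : (G.induce X).Connected) {p : V} (hp : p ∈ X) (hpT : p ∉ T)
    (hXST : Disjoint X (S ∩ T)) : X ⊆ S \ T := by
  intro x hx
  have hxT : x ∉ T := by
    intro hxT
    obtain ⟨w, hw⟩ := exists_walk_of_connected_induce hX hp hx
    obtain ⟨z, hz, hzST⟩ := w.exists_mem_support_mem_inter hsep hpT hxT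
    exact Set.disjoint_left.mp hXST (hw z hz) hzST
  exact ⟨((huniv.symm ▸ Set.mem_univ x : x ∈ S ∪ T)).resolve_right hxT, hxT⟩

lemma connected_induce_inter_of_inter_subset
    (hsep : ∀ ⦃x y⦄, G.Adj x y → x ∈ S ∧ y ∈ S ∨ x ∈ T ∧ y ∈ T) {X : Set V}
    (hX : (G.induce X).Connected) {r : V} (hr : r ∈ X) (hrS : r ∈ S)
    (hXST : X ∩ (S ∩ T) ⊆ {r}) : (G.induce (X ∩ S)).Connected := by
  refine connected_induce_of_forall_walk ⟨hr, hrS⟩ fun x hx => ?_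
  obtain ⟨w, hw⟩ := exists_walk_of_connected_induce hX hx.1 hr
  obtain ⟨z, hz, w', hw'⟩ := w.exists_prefix_in_side hsep hx.2
  obtain rfl : z = r := by
    rcases hz with rfl | hz
    · rfl
    · exact hXST ⟨hw z (hw' z w'.end_mem_support).2, hz⟩
  refine ⟨w'.reverse, fun a ha => ?_⟩
  rw [Walk.support_reverse, List.mem_reverse] at ha
  exact ⟨hw a (hw' a ha).2, (hw' a ha).1⟩

lemma mem_or_mem_of_adj (hsep : ∀ ⦃x y⦄, G.Adj x y → x ∈ S ∧ y ∈ S ∨ x ∈ T ∧ y ∈ T)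
    {r₁ r₂ : V} (hcut : S ∩ T = {r₁, r₂}) {X Y : Set V} (hX : (G.induce X).Connected)
    (hY : (G.induce Y).Connected) (hXY : ∃ x ∈ X, ∃ y ∈ Y, G.Adj x y) {x y : V} (hx : x ∈ X)
    (hy : y ∈ Y) (hxT : x ∉ T) (hyT : y ∈ T) : (r₁ ∈ X ∨ r₂ ∈ X) ∨ (r₁ ∈ Y ∨ r₂ ∈ Y) := by
  obtain ⟨x', hx', y', hy', hxy'⟩ := hXY
  obtain ⟨w, hw⟩ := exists_walk_of_connected_induce
    (connected_induce_union hX.preconnected hY.preconnected hx' hy' hxy') (.inl hx) (.inr hy)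
  obtain ⟨z, hz, hzST⟩ := w.exists_mem_support_mem_inter hsep hxT hyT
  rw [hcut] at hzST
  rcases hzST with rfl | rfl <;> rcases hw z hz with h | h <;> simp [h]

section Linkage

variable {r₁ r₂ s : V}

lemma exists_walk_in_side_of_ne (hG₂ : ∀ w, (G.induce {w}ᶜ).Connected)
    (hsep : ∀ ⦃x y⦄, G.Adj x y → x ∈ S ∧ y ∈ S ∨ x ∈ T ∧ y ∈ T) (hcut : S ∩ T = {r₁, r₂})
    (hsT : s ∉ T) {x : V} (hx : x ∈ T) (hxr : x ≠ r₂) :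
    ∃ w : G.Walk x r₁, ∀ a ∈ w.support, a ∈ T := by
  have hr₂T : r₂ ∈ T := (hcut ▸ .inr rfl : r₂ ∈ S ∩ T).2
  obtain ⟨w, hw⟩ := exists_walk_of_connected_induce (hG₂ r₂) (x := x) (y := s)
    (by simpa using hxr) (by simpa using fun h : s = r₂ => hsT (h ▸ hr₂T))
  obtain ⟨z, hz, w', hw'⟩ := w.exists_prefix_in_side (fun _ _ h => (hsep h).symm) hx
  obtain rfl : z = r₁ := by
    rcases hz with rfl | hz
    · exact absurd (hw' _ w'.end_mem_support).1 hsT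
    · have hzST : z ∈ S ∩ T := ⟨hz.2, hz.1⟩
      rw [hcut] at hzST
      exact hzST.resolve_right (by simpa using hw z (hw' z w'.end_mem_support).2)
  exact ⟨w', fun a ha => (hw' a ha).1⟩

lemma connected_induce_of_separator_pair (hG₂ : ∀ w, (G.induce {w}ᶜ).Connected)
    (hsep : ∀ ⦃x y⦄, G.Adj x y → x ∈ S ∧ y ∈ S ∨ x ∈ T ∧ y ∈ T) (hcut : S ∩ T = {r₁, r₂})
    (hsT : s ∉ T) {z : V} (hz : z ∈ T \ S) : (G.induce T).Connected := by
  have hr₁ : r₁ ∈ S ∩ T := hcut ▸ .inl rfl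
  have hr₂ : r₂ ∈ S ∩ T := hcut ▸ .inr rfl
  have hzr : ∀ {r}, r ∈ S ∩ T → z ≠ r := fun hr h => hz.2 (h ▸ hr.1)
  refine connected_induce_of_forall_walk hr₁.2 fun x hx => ?_
  obtain ⟨w, hw⟩ : ∃ w : G.Walk x r₁, ∀ a ∈ w.support, a ∈ T := by
    by_cases hxr : x = r₂
    · subst hxr
      obtain ⟨w₁, hw₁⟩ := exists_walk_in_side_of_ne hG₂ hsep (hcut.trans (Set.pair_comm _ _))
        hsT hz.1 (hzr hr₁)
      obtain ⟨w₂, hw₂⟩ := exists_walk_in_side_of_ne hG₂ hsep hcut hsT hz.1 (hzr hr₂)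
      refine ⟨w₁.reverse.append w₂, fun a ha => ?_⟩
      rw [Walk.mem_support_append_iff, Walk.support_reverse, List.mem_reverse] at ha
      exact ha.elim (hw₁ a) (hw₂ a)
    · exact exists_walk_in_side_of_ne hG₂ hsep hcut hsT hx hxr
  exact ⟨w.reverse, fun a ha => hw a (by simpa using ha)⟩

lemma exists_walk_to_separator_of_apex_path
    (hsep : ∀ ⦃x y⦄, G.Adj x y → x ∈ S ∧ y ∈ S ∨ x ∈ T ∧ y ∈ T) {Z : Set V} (hZ : Z ⊆ T)
    (hsT : s ∉ T) {p : (Apex G Z).Walk none (some s)} (hp : p.IsPath) :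
    ∃ z ∈ Z, ∃ r ∈ S ∩ T, ∃ w : G.Walk z r, ∀ c ∈ w.support, c ∈ T ∧ some c ∈ p.support := by
  obtain ⟨γ, h, p', rfl⟩ := Walk.exists_eq_cons_of_ne (by simp) p
  obtain ⟨z, rfl⟩ : ∃ z, γ = some z := Option.ne_none_iff_exists'.mp fun h' => by
    subst h'; simp [Apex] at h
  have hzZ : z ∈ Z := Apex.adj_none_some.mp h
  obtain ⟨g, hg⟩ := Apex.exists_walk_of_none_notMem p' ((Walk.cons_isPath_iff h p').mp hp).2
    rfl rfl
  obtain ⟨r, hr, w, hw⟩ := g.exists_prefix_in_side (fun _ _ h => (hsep h).symm) (hZ hzZ)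
  refine ⟨z, hzZ, r, ?_, w, fun c hc => ⟨(hw c hc).1, ?_⟩⟩
  · rcases hr with rfl | hr
    · exact absurd (hw _ w.end_mem_support).1 hsT
    · exact ⟨hr.2, hr.1⟩
  · simp [hg c (hw c hc).2]

lemma exists_disjoint_connected_of_separator (hG : G.Connected)
    (hG₂ : ∀ w, (G.induce {w}ᶜ).Connected)
    (hsep : ∀ ⦃x y⦄, G.Adj x y → x ∈ S ∧ y ∈ S ∨ x ∈ T ∧ y ∈ T) (hcut : S ∩ T = {r₁, r₂})
    (hsT : s ∉ T) {z₁ z₂ : V} (hz₁ : z₁ ∈ T) (hz₂ : z₂ ∈ T) (hz : z₁ ≠ z₂) :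
    ∃ P Q : Set V, P ⊆ T ∧ Q ⊆ T ∧ Disjoint P Q ∧ (G.induce P).Connected ∧
      (G.induce Q).Connected ∧ r₁ ∈ P ∧ r₂ ∈ Q ∧ (z₁ ∈ P ∧ z₂ ∈ Q ∨ z₂ ∈ P ∧ z₁ ∈ Q) := by
  classical
  have pair : ∀ {a b x y : V}, a ∈ ({x, y} : Set V) → b ∈ ({x, y} : Set V) → a ≠ b →
      a = x ∧ b = y ∨ a = y ∧ b = x := by
    rintro a b x y (rfl | rfl) (rfl | rfl) h <;> simp_all
  have hZ : ({z₁, z₂} : Set V) ⊆ T := Set.insert_subset hz₁ (Set.singleton_subset_iff.mpr hz₂)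
  have hZw : ∀ w, ∃ z ∈ ({z₁, z₂} : Set V), z ≠ w := fun w => by
    by_cases h : z₁ = w
    · exact ⟨z₂, .inr rfl, h ▸ hz.symm⟩
    · exact ⟨z₁, .inl rfl, h⟩
  obtain ⟨p, q, hp, hq, hpq⟩ := exists_internallyDisjoint_paths
    (Apex.connected hG ⟨z₁, .inl rfl⟩) (Apex.connected_induce_compl_singleton hG hG₂ hZw)
    (x := none) (y := some s) (by simp)
  obtain ⟨z, hz, r, hr, w, hw⟩ := exists_walk_to_separator_of_apex_path hsep hZ hsT hp
  obtain ⟨z', hz', r', hr', w', hw'⟩ := exists_walk_to_separator_of_apex_path hsep hZ hsT hq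
  -- `p` and `q` meet only in `none` and `some s`, and `s ∉ T`.
  have hdisj : ∀ c ∈ w.support, c ∉ w'.support := by
    intro c hc hc'
    rcases hpq _ (hw c hc).2 (hw' c hc').2 with h | h
    · simp at h
    · exact hsT (Option.some_injective _ h ▸ (hw c hc).1)
  have hzz : z ≠ z' := fun h => hdisj z w.start_mem_support (h ▸ w'.start_mem_support)
  have hrr : r ≠ r' := fun h => hdisj r w.end_mem_support (h ▸ w'.end_mem_support)
  rw [hcut] at hr hr'
  have hwT := fun c hc => (hw c hc).1
  have hw'T := fun c hc => (hw' c hc).1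
  rcases pair hr hr' hrr with ⟨rfl, rfl⟩ | ⟨rfl, rfl⟩
  · refine ⟨_, _, hwT, hw'T, Set.disjoint_left.mpr hdisj, w.connected_induce_support,
      w'.connected_induce_support, w.end_mem_support, w'.end_mem_support, ?_⟩
    rcases pair hz hz' hzz with ⟨rfl, rfl⟩ | ⟨rfl, rfl⟩
    · exact .inl ⟨w.start_mem_support, w'.start_mem_support⟩
    · exact .inr ⟨w.start_mem_support, w'.start_mem_support⟩
  · refine ⟨_, _, hw'T, hwT, Set.disjoint_right.mpr hdisj, w'.connected_induce_support,
      w.connected_induce_support, w'.end_mem_support, w.end_mem_support, ?_⟩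
    rcases pair hz hz' hzz with ⟨rfl, rfl⟩ | ⟨rfl, rfl⟩
    · exact .inr ⟨w'.start_mem_support, w.start_mem_support⟩
    · exact .inl ⟨w'.start_mem_support, w.start_mem_support⟩

theorem exists_linkage {z₁ z₂ : V} (hG : G.Connected)
    (hG₂ : ∀ w, (G.induce {w}ᶜ).Connected)
    (hsep : ∀ ⦃x y⦄, G.Adj x y → x ∈ S ∧ y ∈ S ∨ x ∈ T ∧ y ∈ T) (hcut : S ∩ T = {r₁, r₂})
    (hsT : s ∉ T) (hz₁ : z₁ ∈ T \ S) (hz₂ : z₂ ∈ T) (hz : z₁ ≠ z₂) :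
    ∃ P Q : Set V, P ⊆ T ∧ Q ⊆ T ∧ Disjoint P Q ∧ (G.induce P).Connected ∧
      (G.induce Q).Connected ∧ r₁ ∈ P ∧ r₂ ∈ Q ∧ (z₁ ∈ P ∧ z₂ ∈ Q ∨ z₂ ∈ P ∧ z₁ ∈ Q) ∧
      ∃ x ∈ P, ∃ y ∈ Q, G.Adj x y := by
  obtain ⟨P₀, Q₀, hP₀T, hQ₀T, hPQ, hP₀, hQ₀, hr₁, hr₂, hz'⟩ :=
    exists_disjoint_connected_of_separator hG hG₂ hsep hcut hsT hz₁.1 hz₂ hz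
  have hT := connected_induce_of_separator_pair hG₂ hsep hcut hsT hz₁
  obtain ⟨Q, hQ₀Q, hQT, hP₀P, hQ, hP⟩ := exists_connected_partition hT hP₀T hQ₀T hPQ hP₀ hQ₀
  refine ⟨T \ Q, Q, Set.sdiff_subset, hQT, Set.disjoint_sdiff_left, hP, hQ, hP₀P hr₁, hQ₀Q hr₂,
    hz'.imp (And.imp (hP₀P ·) (hQ₀Q ·)) (And.imp (hP₀P ·) (hQ₀Q ·)),
    exists_adj_diff_of_connected_induce hT (hP₀P hr₁) (hQT (hQ₀Q hr₂)) (hQ₀Q hr₂)⟩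

end Linkage

end Separation

/-- The graph `G_i'` of the statement: the side `S` of a separation with the edge `r₁r₂` added. -/
abbrev torso (G : SimpleGraph V) (S : Set V) (r₁ r₂ : S) : SimpleGraph S :=
  G.induce S ⊔ edge r₁ r₂

section Torso

variable {S T : Set V} {r₁ r₂ : S}

lemma adj_of_torso_adj {x y : S} (h : (G.torso S r₁ r₂).Adj x y) (h₁ : x ≠ r₁) (h₂ : x ≠ r₂) :
    G.Adj x y := by
  rcases h with h | h
  · exact h
  · rw [edge_adj] at h
    rcases h.1 with ⟨rfl, -⟩ | ⟨rfl, -⟩ <;> contradiction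

lemma connected_induce_torso_preimage {X : Set V} (hX : (G.induce (X ∩ S)).Connected) :
    ((G.torso S r₁ r₂).induce (Subtype.val ⁻¹' X)).Connected := by
  have hrange : Set.range (fun x : ↥(X ∩ S) => (⟨x, x.2.2⟩ : S)) = Subtype.val ⁻¹' X := by
    ext y
    exact ⟨by rintro ⟨x, rfl⟩; exact x.2.1, fun hy => ⟨⟨y, hy, y.2⟩, rfl⟩⟩
  rw [← hrange]
  exact connected_induce_range ⟨_, fun h => Or.inl h⟩ hX

lemma connected_induce_image_of_torso {Y : Set S}
    (hY : ((G.torso S r₁ r₂).induce Y).Connected) (hr : r₁ ∉ Y ∨ r₂ ∉ Y) :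
    (G.induce (Subtype.val '' Y)).Connected := by
  have hrange : Set.range (fun y : Y => (y : V)) = Subtype.val '' Y := by
    ext; simp
  rw [← hrange]
  refine connected_induce_range ⟨fun y => y.1.1, fun {x y} h => ?_⟩ hY
  rcases h with h | h
  · exact h
  · rw [edge_adj] at h
    rcases h.1 with ⟨hx, hy⟩ | ⟨hx, hy⟩
    · exact (hr.elim (· (hx ▸ x.2)) (· (hy ▸ y.2))).elim
    · exact (hr.elim (· (hy ▸ y.2)) (· (hx ▸ x.2))).elim

lemma exists_torso_adj_of_subset_diff
    (hsep : ∀ ⦃x y⦄, G.Adj x y → x ∈ S ∧ y ∈ S ∨ x ∈ T ∧ y ∈ T) {X Y : Set V}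
    (hX : X ⊆ S \ T) (hXY : ∃ x ∈ X, ∃ y ∈ Y, G.Adj x y) :
    ∃ x ∈ Subtype.val ⁻¹' X, ∃ y ∈ Subtype.val ⁻¹' Y, (G.torso S r₁ r₂).Adj x y := by
  obtain ⟨x, hx, y, hy, hxy⟩ := hXY
  have hyS : y ∈ S := ((hsep hxy).resolve_right fun h => (hX hx).2 h.1).2
  exact ⟨⟨x, (hX hx).1⟩, hx, ⟨y, hyS⟩, hy, Or.inl hxy⟩

lemma exists_adj_image_of_torso {Y Y' : Set S}
    (h : ∃ x ∈ Y, ∃ y ∈ Y', (G.torso S r₁ r₂).Adj x y) (h₁ : r₁ ∉ Y) (h₂ : r₂ ∉ Y) :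
    ∃ x ∈ Subtype.val '' Y, ∃ y ∈ Subtype.val '' Y', G.Adj x y :=
  let ⟨x, hx, y, hy, hxy⟩ := h
  ⟨x, ⟨x, hx, rfl⟩, y, ⟨y, hy, rfl⟩,
    adj_of_torso_adj hxy (fun h => h₁ (h ▸ hx)) (fun h => h₂ (h ▸ hx))⟩

lemma disjoint_image_val_of_subset (hcut : S ∩ T = {↑r₁, ↑r₂}) {Y : Set S} {R : Set V}
    (hRT : R ⊆ T) (h₁ : r₁ ∈ Y → ↑r₁ ∉ R) (h₂ : r₂ ∈ Y → ↑r₂ ∉ R) :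
    Disjoint (Subtype.val '' Y) R := by
  refine Set.disjoint_left.mpr ?_
  rintro _ ⟨y, hy, rfl⟩ hyR
  have hy' : (y : V) ∈ S ∩ T := ⟨y.2, hRT hyR⟩
  rw [hcut] at hy'
  rcases hy' with h | h
  · exact h₁ ((Subtype.ext h : y = r₁) ▸ hy) (h ▸ hyR)
  · exact h₂ ((Subtype.ext h : y = r₂) ▸ hy) (h ▸ hyR)

end Torso

section Symmetry

variable {a b c d : V} {X₁ X₂ X₃ X₄ : Set V}

lemma RootedK4MinorOn.swap_last (h : RootedK4MinorOn G a b c d X₁ X₂ X₃ X₄) :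
    RootedK4MinorOn G a b d c X₁ X₂ X₄ X₃ := by
  obtain ⟨h₁, h₂, h₃, h₄, c₁, c₂, c₃, c₄, d₁₂, d₁₃, d₁₄, d₂₃, d₂₄, d₃₄,
    e₁₂, e₁₃, e₁₄, e₂₃, e₂₄, ⟨x, hx, y, hy, hxy⟩⟩ := h
  exact ⟨h₁, h₂, h₄, h₃, c₁, c₂, c₄, c₃, d₁₂, d₁₄, d₁₃, d₂₄, d₂₃, d₃₄.symm,
    e₁₂, e₁₄, e₁₃, e₂₄, e₂₃, ⟨y, hy, x, hx, hxy.symm⟩⟩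

lemma RootedK4MinorOn.swap_pairs (h : RootedK4MinorOn G a b c d X₁ X₂ X₃ X₄) :
    RootedK4MinorOn G c d a b X₃ X₄ X₁ X₂ := by
  obtain ⟨h₁, h₂, h₃, h₄, c₁, c₂, c₃, c₄, d₁₂, d₁₃, d₁₄, d₂₃, d₂₄, d₃₄,
    e₁₂, e₁₃, e₁₄, e₂₃, e₂₄, e₃₄⟩ := h
  have flip : ∀ {P Q : Set V}, (∃ x ∈ P, ∃ y ∈ Q, G.Adj x y) → ∃ x ∈ Q, ∃ y ∈ P, G.Adj x y :=
    fun ⟨x, hx, y, hy, hxy⟩ => ⟨y, hy, x, hx, hxy.symm⟩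
  exact ⟨h₃, h₄, h₁, h₂, c₃, c₄, c₁, c₂, d₃₄, d₁₃.symm, d₂₃.symm, d₁₄.symm, d₂₄.symm, d₁₂,
    e₃₄, flip e₁₃, flip e₂₃, flip e₁₄, flip e₂₄, e₁₂⟩

lemma RootedK4Minor.swap_last (h : RootedK4Minor G a b c d) : RootedK4Minor G a b d c :=
  let ⟨_, _, _, _, h⟩ := h; ⟨_, _, _, _, h.swap_last⟩

lemma RootedK4Minor.swap_pairs (h : RootedK4Minor G a b c d) : RootedK4Minor G c d a b :=
  let ⟨_, _, _, _, h⟩ := h; ⟨_, _, _, _, h.swap_pairs⟩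

end Symmetry

lemma split_pair_of_disjoint {r₁ r₂ : V} {X₁ X₂ X₃ X₄ : Set V} (d₁₂ : Disjoint X₁ X₂)
    (d₃₄ : Disjoint X₃ X₄) (h₁₃ : (r₁ ∈ X₁ ∨ r₂ ∈ X₁) ∨ (r₁ ∈ X₃ ∨ r₂ ∈ X₃))
    (h₁₄ : (r₁ ∈ X₁ ∨ r₂ ∈ X₁) ∨ (r₁ ∈ X₄ ∨ r₂ ∈ X₄))
    (h₂₃ : (r₁ ∈ X₂ ∨ r₂ ∈ X₂) ∨ (r₁ ∈ X₃ ∨ r₂ ∈ X₃))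
    (h₂₄ : (r₁ ∈ X₂ ∨ r₂ ∈ X₂) ∨ (r₁ ∈ X₄ ∨ r₂ ∈ X₄)) :
    (r₁ ∈ X₃ ∧ r₂ ∈ X₄ ∨ r₂ ∈ X₃ ∧ r₁ ∈ X₄) ∨ (r₁ ∈ X₁ ∧ r₂ ∈ X₂ ∨ r₂ ∈ X₁ ∧ r₁ ∈ X₂) := by
  have split : ∀ {X Y : Set V}, Disjoint X Y → r₁ ∈ X ∨ r₂ ∈ X → r₁ ∈ Y ∨ r₂ ∈ Y →
      r₁ ∈ X ∧ r₂ ∈ Y ∨ r₂ ∈ X ∧ r₁ ∈ Y := by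
    rintro X Y hXY (hX | hX) (hY | hY)
    · exact (Set.disjoint_left.mp hXY hX hY).elim
    · exact .inl ⟨hX, hY⟩
    · exact .inr ⟨hX, hY⟩
    · exact (Set.disjoint_left.mp hXY hX hY).elim
  by_cases h₃₄ : (r₁ ∈ X₃ ∨ r₂ ∈ X₃) ∧ (r₁ ∈ X₄ ∨ r₂ ∈ X₄)
  · exact .inl (split d₃₄ h₃₄.1 h₃₄.2)
  · rcases not_and_or.mp h₃₄ with h | h
    · exact .inr (split d₁₂ (h₁₃.resolve_right h) (h₂₃.resolve_right h))
    · exact .inr (split d₁₂ (h₁₄.resolve_right h) (h₂₄.resolve_right h))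

section RootedMinor

variable {S T : Set V}

lemma rootedK4Minor_torso_of_rootedK4MinorOn (huniv : S ∪ T = Set.univ)
    (hsep : ∀ ⦃x y⦄, G.Adj x y → x ∈ S ∧ y ∈ S ∨ x ∈ T ∧ y ∈ T) {r₁ r₂ : S}
    (hcut : S ∩ T = {↑r₁, ↑r₂}) {p q : S} (hpT : ↑p ∉ T) (hqT : ↑q ∉ T) {c d : V}
    {X₁ X₂ X₃ X₄ : Set V} (hX : RootedK4MinorOn G p q c d X₁ X₂ X₃ X₄)
    (h₃ : ↑r₁ ∈ X₃) (h₄ : ↑r₂ ∈ X₄) :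
    RootedK4Minor (G.torso S r₁ r₂) p q r₁ r₂ := by
  obtain ⟨hp, hq, -, -, c₁, c₂, c₃, c₄, d₁₂, d₁₃, d₁₄, d₂₃, d₂₄, d₃₄,
    e₁₂, e₁₃, e₁₄, e₂₃, e₂₄, -⟩ := hX
  have avoid : ∀ {X : Set V}, Disjoint X X₃ → Disjoint X X₄ → Disjoint X (S ∩ T) := by
    intro X h₃' h₄'
    rw [hcut, Set.disjoint_insert_right, Set.disjoint_singleton_right]
    exact ⟨fun h => Set.disjoint_left.mp h₃' h h₃, fun h => Set.disjoint_left.mp h₄' h h₄⟩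
  have hX₁ := subset_diff_of_connected_induce huniv hsep c₁ hp hpT (avoid d₁₃ d₁₄)
  have hX₂ := subset_diff_of_connected_induce huniv hsep c₂ hq hqT (avoid d₂₃ d₂₄)
  have only : ∀ {X Y : Set V} {r r' : S}, Disjoint X Y → ↑r' ∈ Y → S ∩ T = {↑r, ↑r'} →
      X ∩ (S ∩ T) ⊆ {↑r} := by
    rintro X Y r r' hXY hr' hST z ⟨hzX, hz⟩
    rw [hST] at hz
    exact hz.resolve_right fun h => Set.disjoint_left.mp hXY (h ▸ hzX) hr'
  have c₃' := connected_induce_inter_of_inter_subset hsep c₃ h₃ r₁.2 (only d₃₄ h₄ hcut)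
  have c₄' := connected_induce_inter_of_inter_subset hsep c₄ h₄ r₂.2
    (only d₃₄.symm h₃ (hcut.trans (Set.pair_comm _ _)))
  have hr : r₁ ≠ r₂ := fun h => Set.disjoint_left.mp d₃₄ h₃ (h ▸ h₄)
  exact ⟨_, _, _, _, hp, hq, h₃, h₄,
    connected_induce_torso_preimage (by rwa [Set.inter_eq_left.mpr fun x hx => (hX₁ hx).1]),
    connected_induce_torso_preimage (by rwa [Set.inter_eq_left.mpr fun x hx => (hX₂ hx).1]),
    connected_induce_torso_preimage c₃', connected_induce_torso_preimage c₄',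
    d₁₂.preimage _, d₁₃.preimage _, d₁₄.preimage _, d₂₃.preimage _, d₂₄.preimage _,
    d₃₄.preimage _, exists_torso_adj_of_subset_diff hsep hX₁ e₁₂,
    exists_torso_adj_of_subset_diff hsep hX₁ e₁₃, exists_torso_adj_of_subset_diff hsep hX₁ e₁₄,
    exists_torso_adj_of_subset_diff hsep hX₂ e₂₃, exists_torso_adj_of_subset_diff hsep hX₂ e₂₄,
    ⟨r₁, h₃, r₂, h₄, Or.inr ((edge_adj ..).mpr ⟨.inl ⟨rfl, rfl⟩, hr⟩)⟩⟩

theorem rootedK4Minor_torso_or_torso (huniv : S ∪ T = Set.univ)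
    (hsep : ∀ ⦃x y⦄, G.Adj x y → x ∈ S ∧ y ∈ S ∨ x ∈ T ∧ y ∈ T) {r₁ r₂ a b c d : V}
    (hcut : S ∩ T = {r₁, r₂}) (hr₁S : r₁ ∈ S) (hr₂S : r₂ ∈ S) (hr₁T : r₁ ∈ T) (hr₂T : r₂ ∈ T)
    (ha : a ∈ S \ T) (hb : b ∈ S \ T) (hc : c ∈ T \ S) (hd : d ∈ T \ S)
    (h : RootedK4Minor G a b c d) :
    RootedK4Minor (G.torso S ⟨r₁, hr₁S⟩ ⟨r₂, hr₂S⟩) ⟨a, ha.1⟩ ⟨b, hb.1⟩ ⟨r₁, hr₁S⟩ ⟨r₂, hr₂S⟩ ∨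
      RootedK4Minor (G.torso T ⟨r₁, hr₁T⟩ ⟨r₂, hr₂T⟩) ⟨r₁, hr₁T⟩ ⟨r₂, hr₂T⟩
        ⟨c, hc.1⟩ ⟨d, hd.1⟩ := by
  obtain ⟨X₁, X₂, X₃, X₄, hX⟩ := h
  obtain ⟨h₁, h₂, h₃, h₄, c₁, c₂, c₃, c₄, d₁₂, -, -, -, -, d₃₄, -, e₁₃, e₁₄, e₂₃, e₂₄, -⟩ := id hX
  have huniv' : T ∪ S = Set.univ := by rwa [Set.union_comm]
  have hcut' : T ∩ S = {r₁, r₂} := by rwa [Set.inter_comm]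
  have hsep' : ∀ ⦃x y⦄, G.Adj x y → x ∈ T ∧ y ∈ T ∨ x ∈ S ∧ y ∈ S := fun _ _ h => (hsep h).symm
  rcases split_pair_of_disjoint d₁₂ d₃₄ (mem_or_mem_of_adj hsep hcut c₁ c₃ e₁₃ h₁ h₃ ha.2 hc.1)
    (mem_or_mem_of_adj hsep hcut c₁ c₄ e₁₄ h₁ h₄ ha.2 hd.1)
    (mem_or_mem_of_adj hsep hcut c₂ c₃ e₂₃ h₂ h₃ hb.2 hc.1)
    (mem_or_mem_of_adj hsep hcut c₂ c₄ e₂₄ h₂ h₄ hb.2 hd.1)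
    with (⟨h₃', h₄'⟩ | ⟨h₃', h₄'⟩) | (⟨h₁', h₂'⟩ | ⟨h₁', h₂'⟩)
  · exact .inl (rootedK4Minor_torso_of_rootedK4MinorOn huniv hsep hcut ha.2 hb.2 hX h₃' h₄')
  · exact .inl
      (rootedK4Minor_torso_of_rootedK4MinorOn huniv hsep hcut ha.2 hb.2 hX.swap_last h₄' h₃')
  · exact .inr (rootedK4Minor_torso_of_rootedK4MinorOn huniv' hsep' hcut' hc.2 hd.2
      hX.swap_pairs h₁' h₂').swap_pairs
  · exact .inr (rootedK4Minor_torso_of_rootedK4MinorOn huniv' hsep' hcut' hc.2 hd.2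
      hX.swap_pairs.swap_last h₂' h₁').swap_pairs

variable {r₁ r₂ : S}

lemma rootedK4MinorOn_of_torso (hcut : S ∩ T = {↑r₁, ↑r₂}) {p q : S} {Y₁ Y₂ Y₃ Y₄ : Set S}
    (hY : RootedK4MinorOn (G.torso S r₁ r₂) p q r₁ r₂ Y₁ Y₂ Y₃ Y₄) {P Q : Set V} (hPT : P ⊆ T)
    (hQT : Q ⊆ T) (hPQ : Disjoint P Q) (hP : (G.induce P).Connected)
    (hQ : (G.induce Q).Connected) (hr₁ : ↑r₁ ∈ P) (hr₂ : ↑r₂ ∈ Q) {c d : V} (hc : c ∈ P)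
    (hd : d ∈ Q) (hPQadj : ∃ x ∈ P, ∃ y ∈ Q, G.Adj x y) :
    RootedK4MinorOn G p q c d (Subtype.val '' Y₁) (Subtype.val '' Y₂)
      (Subtype.val '' Y₃ ∪ P) (Subtype.val '' Y₄ ∪ Q) := by
  obtain ⟨hp, hq, h₃, h₄, c₁, c₂, c₃, c₄, d₁₂, d₁₃, d₁₄, d₂₃, d₂₄, d₃₄,
    e₁₂, e₁₃, e₁₄, e₂₃, e₂₄, e₃₄⟩ := hY
  have n₁₃ : r₁ ∉ Y₁ := fun h => Set.disjoint_left.mp d₁₃ h h₃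
  have n₁₄ : r₂ ∉ Y₁ := fun h => Set.disjoint_left.mp d₁₄ h h₄
  have n₂₃ : r₁ ∉ Y₂ := fun h => Set.disjoint_left.mp d₂₃ h h₃
  have n₂₄ : r₂ ∉ Y₂ := fun h => Set.disjoint_left.mp d₂₄ h h₄
  have n₃ : r₂ ∉ Y₃ := fun h => Set.disjoint_left.mp d₃₄ h h₄
  have n₄ : r₁ ∉ Y₄ := fun h => Set.disjoint_left.mp d₃₄ h₃ h
  have img : ∀ {Y Y' : Set S}, Disjoint Y Y' → Disjoint (Subtype.val '' Y) (Subtype.val '' Y') :=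
    (Set.disjoint_image_iff Subtype.val_injective).mpr
  have avoid : ∀ {Y : Set S} {R : Set V}, R ⊆ T → r₁ ∉ Y → r₂ ∉ Y →
      Disjoint (Subtype.val '' Y) R :=
    fun hRT h₁ h₂ => disjoint_image_val_of_subset hcut hRT (absurd · h₁) (absurd · h₂)
  have toUnion : ∀ {X Y R : Set V}, (∃ x ∈ X, ∃ y ∈ Y, G.Adj x y) →
      ∃ x ∈ X, ∃ y ∈ Y ∪ R, G.Adj x y :=
    fun ⟨x, hx, y, hy, hxy⟩ => ⟨x, hx, y, .inl hy, hxy⟩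
  refine ⟨⟨p, hp, rfl⟩, ⟨q, hq, rfl⟩, .inr hc, .inr hd,
    connected_induce_image_of_torso c₁ (.inl n₁₃), connected_induce_image_of_torso c₂ (.inl n₂₃),
    induce_union_connected (connected_induce_image_of_torso c₃ (.inr n₃)).preconnected
      hP.preconnected ⟨r₁, ⟨r₁, h₃, rfl⟩, hr₁⟩,
    induce_union_connected (connected_induce_image_of_torso c₄ (.inl n₄)).preconnected
      hQ.preconnected ⟨r₂, ⟨r₂, h₄, rfl⟩, hr₂⟩,
    img d₁₂, Set.disjoint_union_right.mpr ⟨img d₁₃, avoid hPT n₁₃ n₁₄⟩,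
    Set.disjoint_union_right.mpr ⟨img d₁₄, avoid hQT n₁₃ n₁₄⟩,
    Set.disjoint_union_right.mpr ⟨img d₂₃, avoid hPT n₂₃ n₂₄⟩,
    Set.disjoint_union_right.mpr ⟨img d₂₄, avoid hQT n₂₃ n₂₄⟩,
    Set.disjoint_union_left.mpr ⟨Set.disjoint_union_right.mpr ⟨img d₃₄,
      disjoint_image_val_of_subset hcut hQT (fun _ => Set.disjoint_left.mp hPQ hr₁) (absurd · n₃)⟩,
      Set.disjoint_union_right.mpr ⟨(disjoint_image_val_of_subset hcut hPT (absurd · n₄)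
        fun _ h => Set.disjoint_left.mp hPQ h hr₂).symm, hPQ⟩⟩,
    exists_adj_image_of_torso e₁₂ n₁₃ n₁₄, toUnion (exists_adj_image_of_torso e₁₃ n₁₃ n₁₄),
    toUnion (exists_adj_image_of_torso e₁₄ n₁₃ n₁₄),
    toUnion (exists_adj_image_of_torso e₂₃ n₂₃ n₂₄),
    toUnion (exists_adj_image_of_torso e₂₄ n₂₃ n₂₄), ?_⟩
  -- The edge `r₁r₂` of the torso is replaced by an edge between `P` and `Q`.
  obtain ⟨x, hx, y, hy, hxy | hxy⟩ := e₃₄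
  · exact ⟨x, .inl ⟨x, hx, rfl⟩, y, .inl ⟨y, hy, rfl⟩, hxy⟩
  · rw [edge_adj] at hxy
    rcases hxy.1 with ⟨-, -⟩ | ⟨rfl, -⟩
    · obtain ⟨x', hx', y', hy', h⟩ := hPQadj
      exact ⟨x', .inr hx', y', .inr hy', h⟩
    · exact (n₃ hx).elim

theorem rootedK4Minor_of_torso (hG : G.Connected) (hG₂ : ∀ w, (G.induce {w}ᶜ).Connected)
    (hsep : ∀ ⦃x y⦄, G.Adj x y → x ∈ S ∧ y ∈ S ∨ x ∈ T ∧ y ∈ T) (hcut : S ∩ T = {↑r₁, ↑r₂})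
    {p q : S} {c d : V} (hc : c ∈ T \ S) (hd : d ∈ T) (hcd : c ≠ d)
    (h : RootedK4Minor (G.torso S r₁ r₂) p q r₁ r₂) : RootedK4Minor G p q c d := by
  obtain ⟨Y₁, Y₂, Y₃, Y₄, hY⟩ := h
  have hpT : (p : V) ∉ T := by
    obtain ⟨hp, -, h₃, h₄, -, -, -, -, -, d₁₃, d₁₄, -⟩ := hY
    intro hpT
    have hp' : (p : V) ∈ S ∩ T := ⟨p.2, hpT⟩
    rw [hcut] at hp'
    rcases hp' with h | h
    · exact Set.disjoint_left.mp d₁₃ hp (Subtype.ext h ▸ h₃)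
    · exact Set.disjoint_left.mp d₁₄ hp (Subtype.ext h ▸ h₄)
  obtain ⟨P, Q, hPT, hQT, hPQ, hP, hQ, hr₁, hr₂, hcd', hPQadj⟩ :=
    exists_linkage hG hG₂ hsep hcut hpT hc hd hcd
  rcases hcd' with ⟨hcP, hdQ⟩ | ⟨hdP, hcQ⟩
  · exact ⟨_, _, _, _, rootedK4MinorOn_of_torso hcut hY hPT hQT hPQ hP hQ hr₁ hr₂ hcP hdQ hPQadj⟩
  · exact RootedK4Minor.swap_last
      ⟨_, _, _, _, rootedK4MinorOn_of_torso hcut hY hPT hQT hPQ hP hQ hr₁ hr₂ hdP hcQ hPQadj⟩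

end RootedMinor

end SimpleGraph

theorem separation22_rooted_K4_minor_general (G : SimpleGraph V) (a b c d u v : V)
    (A B : Set V) (h2 : KConnected 2 G) (hsep : IsSeparation G A B)
    (hcut : A ∩ B = {u, v})
    (huA : u ∈ A) (huB : u ∈ B) (hvA : v ∈ A) (hvB : v ∈ B)
    (ha : a ∈ A \ B) (hb : b ∈ A \ B) (hc : c ∈ B \ A) (hd : d ∈ B \ A)
    (hab : a ≠ b) (hcd : c ≠ d) :
    RootedK4Minor G a b c d ↔
      (RootedK4Minor (G.induce A ⊔ fromEdgeSet {s(⟨u, huA⟩, ⟨v, hvA⟩)})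
          ⟨a, ha.1⟩ ⟨b, hb.1⟩ ⟨u, huA⟩ ⟨v, hvA⟩ ∨
       RootedK4Minor (G.induce B ⊔ fromEdgeSet {s(⟨u, huB⟩, ⟨v, hvB⟩)})
          ⟨u, huB⟩ ⟨v, hvB⟩ ⟨c, hc.1⟩ ⟨d, hd.1⟩) := by
  obtain ⟨huniv, hadj, -, -⟩ := hsep
  have hG := h2.connected two_pos
  have hG₂ := h2.connected_induce_compl_singleton one_lt_two
  refine ⟨rootedK4Minor_torso_or_torso huniv hadj hcut huA hvA huB hvB ha hb hc hd, ?_⟩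
  rintro (h | h)
  · exact rootedK4Minor_of_torso hG hG₂ hadj hcut hc hd.1 hcd h
  · exact (rootedK4Minor_of_torso hG hG₂ (fun _ _ h => (hadj h).symm) (by rwa [Set.inter_comm])
      ha hb.1 hab h.swap_pairs).swap_pairs

/-- reduction of a rooted `K₄`-minor across a `(2,2)`-separation of
order 2 in a 2-connected graph. -/
theorem separation22_rooted_K4_minor [Fintype V] (G : SimpleGraph V) (a b c d u v : V)
    (A B : Set V) (h2 : KConnected 2 G) (hsep : IsSeparation G A B)
    (hcut : A ∩ B = {u, v}) (huv : u ≠ v)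
    (huA : u ∈ A) (huB : u ∈ B) (hvA : v ∈ A) (hvB : v ∈ B)
    (ha : a ∈ A \ B) (hb : b ∈ A \ B) (hc : c ∈ B \ A) (hd : d ∈ B \ A)
    (hab : a ≠ b) (hac : a ≠ c) (had : a ≠ d) (hbc : b ≠ c) (hbd : b ≠ d) (hcd : c ≠ d) :
    RootedK4Minor G a b c d ↔
      (RootedK4Minor (G.induce A ⊔ fromEdgeSet {s(⟨u, huA⟩, ⟨v, hvA⟩)})
          ⟨a, ha.1⟩ ⟨b, hb.1⟩ ⟨u, huA⟩ ⟨v, hvA⟩ ∨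
       RootedK4Minor (G.induce B ⊔ fromEdgeSet {s(⟨u, huB⟩, ⟨v, hvB⟩)})
          ⟨u, huB⟩ ⟨v, hvB⟩ ⟨c, hc.1⟩ ⟨d, hd.1⟩) :=
  separation22_rooted_K4_minor_general G a b c d u v A B h2 hsep hcut huA huB hvA hvB ha hb hc hd
    hab hcd
end

section
/- Let G be a graph with distinct vertices a, b, c, d such that a and b both have neighbourhood exactly {u, v} for some vertices u, v ∉ {a,b,c,d}. Let G' be obtained from G by deleting a and b and adding the edge uv. Then G contains a K_4-minor rooted at a, b, c, d if and only if G' contains a K_4-minor rooted at u, v, c, d. -/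
open SimpleGraph

variable {V : Type*}

/-!
In a rooted `K₄`-minor of `G`, the branch set of `a` touches three pairwise disjoint branch
sets while `a` sees only `u` and `v`, so it cannot be `{a}` and must contain `u` or `v`;
likewise for `b`, so `u` and `v` are split between the branch sets of `a` and `b`. There `a`
and `b` are leaves: deleting them keeps both branch sets connected, and the new edge `uv`
replaces the lost adjacency. Conversely, in `G'` the edge `uv` can only join the branch sets
of `u` and `v`, so adding `a` to the first and `b` to the second gives a minor of `G`, with
`av` in place of `uv`.
-/

namespace SimpleGraph

lemma Connected.induce_range {W : Type*} {G : SimpleGraph V} {H : SimpleGraph W} (f : H →g G)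
    (hH : H.Connected) : (G.induce (Set.range f)).Connected :=
  hH.map ⟨fun x => ⟨f x, x, rfl⟩, f.map_rel⟩ (by rintro ⟨_, x, rfl⟩; exact ⟨x, rfl⟩)

lemma Connected.induce_preimage_val {G : SimpleGraph V} {S X : Set V} {G' : SimpleGraph S}
    (hX : (G.induce X).Connected) (hle : G.induce S ≤ G') (hXS : X ⊆ S) :
    (G'.induce (Subtype.val ⁻¹' X)).Connected := by
  let f : G.induce X →g G' := ⟨fun x => ⟨x, hXS x.2⟩, fun h => hle h⟩
  have hf : Set.range f = Subtype.val ⁻¹' X :=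
    Set.ext fun x => ⟨by rintro ⟨y, rfl⟩; exact y.2, fun hx => ⟨⟨x, hx⟩, rfl⟩⟩
  exact hf ▸ hX.induce_range f

lemma Connected.induce_image_val {G : SimpleGraph V} {S : Set V} {G' : SimpleGraph S} {X : Set S}
    (hX : (G'.induce X).Connected) (hadj : ∀ x ∈ X, ∀ y ∈ X, G'.Adj x y → G.Adj x y) :
    (G.induce (Subtype.val '' X)).Connected := by
  let f : G'.induce X →g G := ⟨fun x => x.1.1, fun {x y} h => hadj x x.2 y y.2 h⟩
  have hf : Set.range f = Subtype.val '' X := by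
    ext
    simp [f]
  exact hf ▸ hX.induce_range f

lemma Connected.induce_diff_singleton_of_leaf {G : SimpleGraph V} {s : Set V} {a u : V}
    (hs : (G.induce s).Connected) (hu : u ∈ s) (hua : u ≠ a)
    (hleaf : ∀ z ∈ s, G.Adj a z → z = u) : (G.induce (s \ {a})).Connected := by
  have hpre := hs.preconnected.induce_of_degree_eq_one (s := {x : s | x.1 ≠ a}) <| by
    rintro ⟨x, hx⟩ hxa y hy z hz
    obtain rfl : x = a := not_not.mp hxa
    exact Subtype.ext ((hleaf y y.2 hy).trans (hleaf z z.2 hz).symm)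
  have hconn : ((G.induce s).induce {x : s | x.1 ≠ a}).Connected :=
    { preconnected := hpre, nonempty := ⟨⟨⟨u, hu⟩, hua⟩⟩ }
  have hset : Subtype.val '' {x : s | x.1 ≠ a} = s \ {a} := by
    ext
    simp [and_comm]
  exact hset ▸ hconn.induce_image_val fun _ _ _ _ h => h

lemma Connected.induce_insert_of_adj {G : SimpleGraph V} {s : Set V} {a x : V}
    (hs : (G.induce s).Connected) (hx : x ∈ s) (hax : G.Adj a x) :
    (G.induce (insert a s)).Connected := by
  have h := induce_union_connected (induce_pair_connected_of_adj hax).preconnected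
    hs.preconnected ⟨x, by simp, hx⟩
  rwa [Set.insert_union, Set.singleton_union, Set.insert_eq_of_mem hx] at h

lemma Adj.of_le_sup_edge {W : Type*} {K L : SimpleGraph W} {u v w x y : W}
    (hK : K ≤ L ⊔ fromEdgeSet {s(u, v)}) (hxy : K.Adj x y) (hw : w ∈ s(u, v))
    (hx : x ≠ w) (hy : y ≠ w) : L.Adj x y := by
  rcases hK hxy with h | h
  · exact h
  · rw [fromEdgeSet_adj, Set.mem_singleton_iff] at h
    rw [← h.1, Sym2.mem_iff] at hw
    rcases hw with rfl | rfl
    exacts [absurd rfl hx, absurd rfl hy]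

end SimpleGraph

section RootedK4Minor

variable {G : SimpleGraph V} {a b c d u v : V} {A B C D : Set V}

lemma RootedK4MinorOn.swap12 (h : RootedK4MinorOn G a b c d A B C D) :
    RootedK4MinorOn G b a c d B A C D := by
  obtain ⟨ha, hb, hc, hd, cA, cB, cC, cD, dAB, dAC, dAD, dBC, dBD, dCD,
    ⟨x, hx, y, hy, hxy⟩, eAC, eAD, eBC, eBD, eCD⟩ := h
  exact ⟨hb, ha, hc, hd, cB, cA, cC, cD, dAB.symm, dBC, dBD, dAC, dAD, dCD,
    ⟨y, hy, x, hx, hxy.symm⟩, eBC, eBD, eAC, eAD, eCD⟩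

lemma RootedK4MinorOn.mem_or_mem_of_neighborSet_subset (h : RootedK4MinorOn G a b c d A B C D)
    (hN : G.neighborSet a ⊆ {u, v}) : u ∈ A ∨ v ∈ A := by
  obtain ⟨ha, -, -, -, cA, -, -, -, -, -, -, dBC, dBD, dCD, eAB, eAC, eAD, -⟩ := h
  by_contra! huv
  have hA : ∀ x ∈ A, x = a := by
    intro x hx
    by_contra hxa
    have : Nontrivial A := ⟨⟨a, ha⟩, ⟨x, hx⟩, fun h => hxa (Subtype.ext_iff.mp h).symm⟩
    obtain ⟨⟨z, hz⟩, haz⟩ := cA.preconnected.exists_adj_of_nontrivial ⟨a, ha⟩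
    rcases hN haz with rfl | rfl
    exacts [huv.1 hz, huv.2 hz]
  have hit : ∀ {X : Set V}, (∃ x ∈ A, ∃ y ∈ X, G.Adj x y) → u ∈ X ∨ v ∈ X := by
    rintro X ⟨x, hx, y, hy, hxy⟩
    rw [hA x hx] at hxy
    rcases hN hxy with rfl | rfl
    exacts [Or.inl hy, Or.inr hy]
  rcases hit eAB with hB | hB <;> rcases hit eAC with hC | hC <;> rcases hit eAD with hD | hD <;>
    first
    | exact dBC.notMem_of_mem_left hB hC
    | exact dBD.notMem_of_mem_left hB hD
    | exact dCD.notMem_of_mem_left hC hD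

lemma RootedK4MinorOn.mem_and_mem_or_of_neighborSet_subset
    (h : RootedK4MinorOn G a b c d A B C D)
    (hNa : G.neighborSet a ⊆ {u, v}) (hNb : G.neighborSet b ⊆ {u, v}) :
    (u ∈ A ∧ v ∈ B) ∨ (v ∈ A ∧ u ∈ B) := by
  have hA := h.mem_or_mem_of_neighborSet_subset hNa
  have hB := h.swap12.mem_or_mem_of_neighborSet_subset hNb
  obtain ⟨-, -, -, -, -, -, -, -, dAB, -⟩ := h
  rcases hA with huA | hvA <;> rcases hB with huB | hvB
  exacts [absurd huB (dAB.notMem_of_mem_left huA), Or.inl ⟨huA, hvB⟩, Or.inr ⟨hvA, huB⟩,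
    absurd hvB (dAB.notMem_of_mem_left hvA)]

lemma exists_adj_diff_singleton_of_neighborSet_subset {Y : Set V}
    (hN : G.neighborSet a ⊆ {u, v}) (hu : u ∉ Y) (hv : v ∉ Y)
    (h : ∃ x ∈ A, ∃ y ∈ Y, G.Adj x y) : ∃ x ∈ A \ {a}, ∃ y ∈ Y, G.Adj x y := by
  obtain ⟨x, hx, y, hy, hxy⟩ := h
  refine ⟨x, ⟨hx, ?_⟩, y, hy, hxy⟩
  rintro (rfl : x = a)
  rcases hN hxy with rfl | rfl
  exacts [hu hy, hv hy]

lemma exists_adj_preimage_val {S X Y : Set V} {G' : SimpleGraph S} (hle : G.induce S ≤ G')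
    (hXS : X ⊆ S) (hYS : Y ⊆ S) (h : ∃ x ∈ X, ∃ y ∈ Y, G.Adj x y) :
    ∃ x ∈ Subtype.val ⁻¹' X, ∃ y ∈ Subtype.val ⁻¹' Y, G'.Adj x y := by
  obtain ⟨x, hx, y, hy, hxy⟩ := h
  exact ⟨⟨x, hXS hx⟩, hx, ⟨y, hYS hy⟩, hy, hle hxy⟩

lemma exists_adj_image_val {S : Set V} {G' : SimpleGraph S} {X Y : Set S}
    (hadj : ∀ x ∈ X, ∀ y ∈ Y, G'.Adj x y → G.Adj x y)
    (h : ∃ x ∈ X, ∃ y ∈ Y, G'.Adj x y) :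
    ∃ x ∈ Subtype.val '' X, ∃ y ∈ Subtype.val '' Y, G.Adj x y := by
  obtain ⟨x, hx, y, hy, hxy⟩ := h
  exact ⟨x, Set.mem_image_of_mem _ hx, y, Set.mem_image_of_mem _ hy, hadj x hx y hy hxy⟩

end RootedK4Minor

section Ears

variable {G : SimpleGraph V} {S : Set V} {G' : SimpleGraph S} {a b : V}

lemma RootedK4MinorOn.contract_ears {u v c d : S} {A B C D : Set V}
    (hle : G.induce S ≤ G') (huv : G'.Adj u v) (hS : ∀ x, x ≠ a → x ≠ b → x ∈ S)
    (hua : (u : V) ≠ a) (hvb : (v : V) ≠ b)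
    (hNa : G.neighborSet a ⊆ {↑u, ↑v}) (hNb : G.neighborSet b ⊆ {↑u, ↑v})
    (h : RootedK4MinorOn G a b c d A B C D) (huA : ↑u ∈ A) (hvB : ↑v ∈ B) :
    RootedK4MinorOn G' u v c d (Subtype.val ⁻¹' (A \ {a})) (Subtype.val ⁻¹' (B \ {b}))
      (Subtype.val ⁻¹' C) (Subtype.val ⁻¹' D) := by
  obtain ⟨haA, hbB, hcC, hdD, cA, cB, cC, cD, dAB, dAC, dAD, dBC, dBD, dCD,
    -, eAC, eAD, eBC, eBD, eCD⟩ := h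
  have hvA : (v : V) ∉ A := dAB.notMem_of_mem_right hvB
  have huB : (u : V) ∉ B := dAB.notMem_of_mem_left huA
  have hsub : ∀ {X : Set V}, a ∉ X → b ∉ X → X ⊆ S := fun ha hb x hx =>
    hS x (ne_of_mem_of_not_mem hx ha) (ne_of_mem_of_not_mem hx hb)
  have hA : A \ {a} ⊆ S := hsub (fun h => h.2 rfl) fun h => dAB.notMem_of_mem_right hbB h.1
  have hB : B \ {b} ⊆ S := hsub (fun h => dAB.notMem_of_mem_left haA h.1) fun h => h.2 rfl
  have hC : C ⊆ S := hsub (dAC.notMem_of_mem_left haA) (dBC.notMem_of_mem_left hbB)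
  have hD : D ⊆ S := hsub (dAD.notMem_of_mem_left haA) (dBD.notMem_of_mem_left hbB)
  have cA' : (G.induce (A \ {a})).Connected := cA.induce_diff_singleton_of_leaf huA hua
    fun z hz haz => (hNa haz).resolve_right fun h => hvA (h ▸ hz)
  have cB' : (G.induce (B \ {b})).Connected := cB.induce_diff_singleton_of_leaf hvB hvb
    fun z hz hbz => (hNb hbz).resolve_left fun h => huB (h ▸ hz)
  have eA : ∀ {Y : Set V}, Disjoint A Y → Disjoint B Y → Y ⊆ S →
      (∃ x ∈ A, ∃ y ∈ Y, G.Adj x y) →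
      ∃ x ∈ Subtype.val ⁻¹' (A \ {a}), ∃ y ∈ Subtype.val ⁻¹' Y, G'.Adj x y :=
    fun dA dB hY e => exists_adj_preimage_val hle hA hY <|
      exists_adj_diff_singleton_of_neighborSet_subset hNa
        (dA.notMem_of_mem_left huA) (dB.notMem_of_mem_left hvB) e
  have eB : ∀ {Y : Set V}, Disjoint A Y → Disjoint B Y → Y ⊆ S →
      (∃ x ∈ B, ∃ y ∈ Y, G.Adj x y) →
      ∃ x ∈ Subtype.val ⁻¹' (B \ {b}), ∃ y ∈ Subtype.val ⁻¹' Y, G'.Adj x y :=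
    fun dA dB hY e => exists_adj_preimage_val hle hB hY <|
      exists_adj_diff_singleton_of_neighborSet_subset hNb
        (dA.notMem_of_mem_left huA) (dB.notMem_of_mem_left hvB) e
  exact ⟨⟨huA, hua⟩, ⟨hvB, hvb⟩, hcC, hdD, cA'.induce_preimage_val hle hA,
    cB'.induce_preimage_val hle hB, cC.induce_preimage_val hle hC, cD.induce_preimage_val hle hD,
    (dAB.mono Set.sdiff_subset Set.sdiff_subset).preimage _,
    (dAC.mono_left Set.sdiff_subset).preimage _, (dAD.mono_left Set.sdiff_subset).preimage _,
    (dBC.mono_left Set.sdiff_subset).preimage _, (dBD.mono_left Set.sdiff_subset).preimage _,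
    dCD.preimage _, ⟨u, ⟨huA, hua⟩, v, ⟨hvB, hvb⟩, huv⟩,
    eA dAC dBC hC eAC, eA dAD dBD hD eAD,
    eB dAC dBC hC eBC, eB dAD dBD hD eBD, exists_adj_preimage_val hle hC hD eCD⟩

lemma RootedK4MinorOn.attach_ears {u v c d : S} {A B C D : Set S}
    (hle : G' ≤ G.induce S ⊔ fromEdgeSet {s(u, v)}) (haS : a ∉ S) (hbS : b ∉ S)
    (hab : a ≠ b)
    (hau : G.Adj a u) (hav : G.Adj a v) (hbv : G.Adj b v)
    (h : RootedK4MinorOn G' u v c d A B C D) :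
    RootedK4MinorOn G a b c d (insert a (Subtype.val '' A)) (insert b (Subtype.val '' B))
      (Subtype.val '' C) (Subtype.val '' D) := by
  obtain ⟨huA, hvB, hcC, hdD, cA, cB, cC, cD, dAB, dAC, dAD, dBC, dBD, dCD,
    -, eAC, eAD, eBC, eBD, eCD⟩ := h
  -- Only the edge `uv` of `G'` is missing from `G`, and it joins `A` to `B`.
  have adj : ∀ {X Y : Set S} {w : S}, w ∈ s(u, v) → w ∉ X → w ∉ Y →
      ∀ x ∈ X, ∀ y ∈ Y, G'.Adj x y → G.Adj x y := fun hw hX hY x hx y hy hxy =>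
    hxy.of_le_sup_edge (L := G.induce S) hle hw (fun h => hX (h ▸ hx)) fun h => hY (h ▸ hy)
  have insert_left : ∀ {X Y : Set V} {z : V}, (∃ x ∈ X, ∃ y ∈ Y, G.Adj x y) →
      ∃ x ∈ insert z X, ∃ y ∈ Y, G.Adj x y :=
    fun ⟨x, hx, y, hy, hxy⟩ => ⟨x, Set.mem_insert_of_mem _ hx, y, hy, hxy⟩
  have hdisj : ∀ {X Y : Set S}, Disjoint X Y → Disjoint (Subtype.val '' X) (Subtype.val '' Y) :=
    (Set.disjoint_image_iff Subtype.val_injective).mpr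
  have hout : ∀ {z : V} {X : Set S}, z ∉ S → z ∉ Subtype.val '' X :=
    fun hz ⟨x, _, hx⟩ => hz (hx ▸ x.2)
  have hu : u ∈ s(u, v) := Sym2.mem_mk_left u v
  have hv : v ∈ s(u, v) := Sym2.mem_mk_right u v
  have hvA := dAB.notMem_of_mem_right hvB
  have huB := dAB.notMem_of_mem_left huA
  have huC := dAC.notMem_of_mem_left huA
  have huD := dAD.notMem_of_mem_left huA
  have hvC := dBC.notMem_of_mem_left hvB
  have hvD := dBD.notMem_of_mem_left hvB
  refine ⟨Set.mem_insert _ _, Set.mem_insert _ _, Set.mem_image_of_mem _ hcC,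
    Set.mem_image_of_mem _ hdD,
    (cA.induce_image_val (adj hv hvA hvA)).induce_insert_of_adj
      (Set.mem_image_of_mem _ huA) hau,
    (cB.induce_image_val (adj hu huB huB)).induce_insert_of_adj
      (Set.mem_image_of_mem _ hvB) hbv,
    cC.induce_image_val (adj hu huC huC), cD.induce_image_val (adj hu huD huD),
    ?_, ?_, ?_, ?_, ?_, hdisj dCD,
    ⟨a, Set.mem_insert _ _, v, Set.mem_insert_of_mem _ (Set.mem_image_of_mem _ hvB), hav⟩,
    insert_left (exists_adj_image_val (adj hv hvA hvC) eAC),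
    insert_left (exists_adj_image_val (adj hv hvA hvD) eAD),
    insert_left (exists_adj_image_val (adj hu huB huC) eBC),
    insert_left (exists_adj_image_val (adj hu huB huD) eBD),
    exists_adj_image_val (adj hu huC huD) eCD⟩
  · simp only [Set.disjoint_insert_left, Set.disjoint_insert_right, Set.mem_insert_iff, not_or]
    exact ⟨⟨hab.symm, hout hbS⟩, hout haS, hdisj dAB⟩
  all_goals
    rw [Set.disjoint_insert_left]
    exact ⟨hout ‹_›, hdisj ‹_›⟩

end Ears

theorem ear_reduction_rooted_K4_minor_general (G : SimpleGraph V) (a b c d u v : V)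
    (hab : a ≠ b) (hac : a ≠ c) (had : a ≠ d) (hbc : b ≠ c) (hbd : b ≠ d)
    (huv : u ≠ v)
    (hua : u ≠ a) (hub : u ≠ b)
    (hva : v ≠ a) (hvb : v ≠ b)
    (hNa : G.neighborSet a = {u, v}) (hNb : G.neighborSet b = {u, v}) :
    RootedK4Minor G a b c d ↔
      RootedK4Minor
        (G.induce {x : V | x ≠ a ∧ x ≠ b} ⊔
          fromEdgeSet {s((⟨u, hua, hub⟩ : {x : V // x ≠ a ∧ x ≠ b}), ⟨v, hva, hvb⟩)})
        ⟨u, hua, hub⟩ ⟨v, hva, hvb⟩ ⟨c, hac.symm, hbc.symm⟩ ⟨d, had.symm, hbd.symm⟩ := by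
  have hS : ∀ x, x ≠ a → x ≠ b → x ∈ {x : V | x ≠ a ∧ x ≠ b} := fun _ => And.intro
  set G' := G.induce {x : V | x ≠ a ∧ x ≠ b} ⊔
    fromEdgeSet {s((⟨u, hua, hub⟩ : {x : V // x ≠ a ∧ x ≠ b}), ⟨v, hva, hvb⟩)}
  have huv' : G'.Adj ⟨u, hua, hub⟩ ⟨v, hva, hvb⟩ :=
    Or.inr ⟨rfl, Subtype.coe_ne_coe.mp huv⟩
  constructor
  · rintro ⟨A, B, C, D, h⟩
    rcases h.mem_and_mem_or_of_neighborSet_subset hNa.subset hNb.subset with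
      ⟨huA, hvB⟩ | ⟨hvA, huB⟩
    · exact ⟨_, _, _, _,
        h.contract_ears le_sup_left huv' hS hua hvb hNa.subset hNb.subset huA hvB⟩
    · exact ⟨_, _, _, _, (h.contract_ears le_sup_left huv'.symm hS hva hub
        (hNa.trans (Set.pair_comm u v)).subset (hNb.trans (Set.pair_comm u v)).subset
        hvA huB).swap12⟩
  · rintro ⟨A', B', C', D', h⟩
    have hadj : ∀ {x y}, G.neighborSet x = {u, v} → y = u ∨ y = v → G.Adj x y :=
      fun hN hy => show _ ∈ G.neighborSet _ by rw [hN]; exact hy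
    exact ⟨_, _, _, _, h.attach_ears le_rfl (fun h => h.1 rfl) (fun h => h.2 rfl) hab
      (hadj hNa (Or.inl rfl)) (hadj hNa (Or.inr rfl)) (hadj hNb (Or.inr rfl))⟩

/-- if `a` and `b` both have neighbourhood exactly `{u,v}` with
`u,v ∉ {a,b,c,d}`, then deleting `a,b` and adding the edge `uv` preserves
existence of the rooted `K₄`-minor (with roots `u,v,c,d`). -/
theorem ear_reduction_rooted_K4_minor (G : SimpleGraph V) (a b c d u v : V)
    (hab : a ≠ b) (hac : a ≠ c) (had : a ≠ d) (hbc : b ≠ c) (hbd : b ≠ d) (hcd : c ≠ d)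
    (huv : u ≠ v)
    (hua : u ≠ a) (hub : u ≠ b) (huc : u ≠ c) (hud : u ≠ d)
    (hva : v ≠ a) (hvb : v ≠ b) (hvc : v ≠ c) (hvd : v ≠ d)
    (hNa : G.neighborSet a = {u, v}) (hNb : G.neighborSet b = {u, v}) :
    RootedK4Minor G a b c d ↔
      RootedK4Minor
        (G.induce {x : V | x ≠ a ∧ x ≠ b} ⊔
          fromEdgeSet {s((⟨u, hua, hub⟩ : {x : V // x ≠ a ∧ x ≠ b}), ⟨v, hva, hvb⟩)})
        ⟨u, hua, hub⟩ ⟨v, hva, hvb⟩ ⟨c, hac.symm, hbc.symm⟩ ⟨d, had.symm, hbd.symm⟩ :=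
  ear_reduction_rooted_K4_minor_general G a b c d u v hab hac had hbc hbd huv hua hub hva hvb hNa
    hNb
end
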